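/- arXiv:2208.02654 — 10 statements merged into one kernel-verified Lean document; each statement's English description precedes it below -/
import Mathlib

section
/- Let N ≥ 1 and let A and B be N×N complex Hermitian matrices with A positive semidefinite and B positive definite. Let λ₁(A) ≥ λ₂(A) ≥ … ≥ λ_N(A) and λ₁(B) ≥ λ₂(B) ≥ … ≥ λ_N(B) denote their eigenvalues listed in decreasing order. Then ∏_{i=1}^N (1 + λ_i(A)/λ_i(B)) ≤ det(I + A·B⁻¹), where det(I + A·B⁻¹) = det(B + A)/det(B) is a positive real number. -/
/-!
Let `α`, `β`, `γ` be the decreasing eigenvalues of `A`, `B` and `B + A`. Since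
`det (1 + A B⁻¹) = det (B + A) / det B = ∏ γᵢ / ∏ βᵢ`, it suffices to show
`∏ (βᵢ + αᵢ) ≤ ∏ γᵢ`. The diagonal of `Uᴴ M U` over `j + 1` indices is `∑ cᵢ λᵢ(M)` with weights
`cᵢ ∈ [0, 1]` summing to `j + 1`, hence at most the sum of the `j + 1` largest eigenvalues
(Ky Fan). Taking `U` to diagonalise `B + A` shows that every partial sum `γ₁ + ⋯ + γⱼ` is at most
the corresponding partial sum of `β + α`, with equality for `j = N` (traces). For `γ` decreasing
and positive, Abel summation then gives `∑ (βᵢ + αᵢ - γᵢ) / γᵢ ≤ 0`, and `y ≤ exp (y - 1)`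
turns this into `∏ (βᵢ + αᵢ) / γᵢ ≤ 1`.
-/

open Finset Matrix

section OrderedRing

variable {R : Type*} [CommRing R] [LinearOrder R] [IsStrictOrderedRing R]

theorem Fin.sum_mul_nonneg_of_antitone {n : ℕ} {x d : Fin n → R} (hx : Antitone x)
    (hx₀ : 0 ≤ x) (hd : ∀ j, 0 ≤ ∑ i ∈ Iic j, d i) : 0 ≤ ∑ i, x i * d i := by
  induction n with
  | zero => simp
  | succ n ih =>
    have hrest : 0 ≤ ∑ i : Fin n, (x i.castSucc - x (Fin.last n)) * d i.castSucc := by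
      refine ih (fun i j hij => by simpa using hx (Fin.castSucc_le_castSucc_iff.2 hij))
        (fun i => sub_nonneg.2 (hx (Fin.le_last _))) (fun j => ?_)
      simpa [← Fin.map_castSuccEmb_Iic] using hd j.castSucc
    have htotal : 0 ≤ ∑ i, d i := by simpa [← Fin.top_eq_last, Iic_top] using hd ⊤
    calc (0 : R) ≤ ∑ i : Fin n, (x i.castSucc - x (Fin.last n)) * d i.castSucc
          + x (Fin.last n) * ∑ i, d i := add_nonneg hrest (mul_nonneg (hx₀ _) htotal)
      _ = ∑ i, x i * d i := by
        simp only [Fin.sum_univ_castSucc, mul_add, mul_sum, sub_mul, sum_sub_distrib]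
        ring

theorem Fin.sum_mul_nonpos_of_monotone {n : ℕ} {w d : Fin n → R} (hw : Monotone w)
    (hd : ∀ j, 0 ≤ ∑ i ∈ Iic j, d i) (hd₀ : ∑ i, d i = 0) : ∑ i, w i * d i ≤ 0 := by
  obtain ⟨t, ht⟩ := (Set.finite_range w).bddAbove
  have habel := Fin.sum_mul_nonneg_of_antitone (x := fun i => t - w i)
    (fun i j hij => sub_le_sub_left (hw hij) t) (fun i => sub_nonneg.2 (ht ⟨i, rfl⟩)) hd
  simpa [sub_mul, sum_sub_distrib, ← mul_sum, hd₀] using habel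

theorem sum_mul_le_sum_of_le_one {ι : Type*} [Fintype ι] [DecidableEq ι] {c l : ι → R}
    {s : Finset ι} {t : R} (hc₀ : 0 ≤ c) (hc₁ : c ≤ 1) (hcs : ∑ i, c i = #s)
    (hs : ∀ i ∈ s, t ≤ l i) (hsc : ∀ i ∉ s, l i ≤ t) :
    ∑ i, c i * l i ≤ ∑ i ∈ s, l i := by
  have hterm : ∀ i, (c i - if i ∈ s then 1 else 0) * (l i - t) ≤ 0 := fun i => by
    split_ifs with hi
    · exact mul_nonpos_of_nonpos_of_nonneg (sub_nonpos.2 (hc₁ i)) (sub_nonneg.2 (hs i hi))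
    · simpa using mul_nonpos_of_nonneg_of_nonpos (hc₀ i) (sub_nonpos.2 (hsc i hi))
  have hsum := sum_nonpos fun i (_ : i ∈ univ) => hterm i
  simp only [sub_mul, mul_sub, ite_mul, one_mul, zero_mul, sum_sub_distrib, sum_ite_mem,
    univ_inter, ← sum_mul, hcs, sum_const, nsmul_eq_mul] at hsum
  linarith

end OrderedRing

theorem Fin.prod_le_prod_of_sum_Iic_le {n : ℕ} {u v : Fin n → ℝ} (hu : Antitone u)
    (hu₀ : ∀ i, 0 < u i) (hv₀ : ∀ i, 0 ≤ v i)
    (huv : ∀ j, ∑ i ∈ Iic j, u i ≤ ∑ i ∈ Iic j, v i) (htot : ∑ i, u i = ∑ i, v i) :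
    ∏ i, v i ≤ ∏ i, u i := by
  have habel : ∑ i, (u i)⁻¹ * (v i - u i) ≤ 0 :=
    Fin.sum_mul_nonpos_of_monotone (fun i j hij => inv_anti₀ (hu₀ j) (hu hij))
      (fun j => by simpa [sum_sub_distrib] using huv j) (by simp [sum_sub_distrib, htot])
  have hratio : ∏ i, v i / u i ≤ 1 := calc
    ∏ i, v i / u i ≤ ∏ i, Real.exp ((u i)⁻¹ * (v i - u i)) := by
      refine prod_le_prod (fun i _ => div_nonneg (hv₀ i) (hu₀ i).le) fun i _ => ?_
      have hy : (u i)⁻¹ * (v i - u i) = v i / u i - 1 := by field_simp [(hu₀ i).ne']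
      simpa [hy] using Real.add_one_le_exp (v i / u i - 1)
    _ = Real.exp (∑ i, (u i)⁻¹ * (v i - u i)) := (Real.exp_sum _ _).symm
    _ ≤ 1 := Real.exp_le_one_iff.2 habel
  rwa [prod_div_distrib, div_le_one (prod_pos fun i _ => hu₀ i)] at hratio

theorem Tuple.exists_perm_antitone {α : Type*} [LinearOrder α] {n : ℕ} (f : Fin n → α) :
    ∃ e : Equiv.Perm (Fin n), Antitone (f ∘ e) :=
  ⟨Fin.revPerm.trans (Tuple.sort f), fun _ _ hab => Tuple.monotone_sort f (Fin.rev_le_rev.2 hab)⟩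

namespace Matrix

theorem det_one_add_mul_inv {K n : Type*} [Field K] [Fintype n] [DecidableEq n]
    (A B : Matrix n n K) (hB : IsUnit B.det) : (1 + A * B⁻¹).det = (B + A).det / B.det := by
  rw [← mul_nonsing_inv B hB, ← add_mul, det_mul, det_nonsing_inv, Ring.inverse_eq_inv',
    div_eq_mul_inv]

variable {𝕜 : Type*} [RCLike 𝕜] {n : Type*} [Fintype n] [DecidableEq n]

theorem sum_norm_sq_apply_right_eq_one {U : Matrix n n 𝕜} (hU : U ∈ unitaryGroup n 𝕜) (i : n) :
    ∑ j, ‖U i j‖ ^ 2 = 1 := by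
  have h : (U * Uᴴ) i i = 1 := by
    rw [← star_eq_conjTranspose, Unitary.mul_star_self_of_mem hU, one_apply_eq]
  simp only [mul_apply, conjTranspose_apply, RCLike.star_def, RCLike.mul_conj] at h
  exact_mod_cast h

theorem sum_norm_sq_apply_left_eq_one {U : Matrix n n 𝕜} (hU : U ∈ unitaryGroup n 𝕜) (j : n) :
    ∑ i, ‖U i j‖ ^ 2 = 1 := by
  simpa using sum_norm_sq_apply_right_eq_one (Unitary.star_mem hU) j

theorem re_conjTranspose_mul_diagonal_mul_apply_self (W : Matrix n n 𝕜) (g : n → ℝ) (k : n) :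
    RCLike.re ((Wᴴ * diagonal (RCLike.ofReal ∘ g : n → 𝕜) * W) k k) = ∑ i, ‖W i k‖ ^ 2 * g i := by
  rw [mul_apply, map_sum]
  refine sum_congr rfl fun i _ => ?_
  rw [mul_diagonal, conjTranspose_apply, RCLike.star_def, mul_right_comm, RCLike.conj_mul,
    Function.comp_apply]
  norm_cast

namespace IsHermitian

variable {M : Matrix n n 𝕜}

theorem det_eq_prod_eigenvalues_comp (hM : M.IsHermitian) (e : Equiv.Perm n) :
    M.det = ((∏ i, hM.eigenvalues (e i) : ℝ) : 𝕜) := by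
  rw [hM.det_eq_prod_eigenvalues, Equiv.prod_comp e fun i => hM.eigenvalues i, RCLike.ofReal_prod]

theorem trace_eq_sum_eigenvalues_comp (hM : M.IsHermitian) (e : Equiv.Perm n) :
    M.trace = ((∑ i, hM.eigenvalues (e i) : ℝ) : 𝕜) := by
  rw [hM.trace_eq_sum_eigenvalues, Equiv.sum_comp e fun i => hM.eigenvalues i, RCLike.ofReal_sum]

theorem re_conjTranspose_eigenvectorUnitary_mul_mul_apply_self (hM : M.IsHermitian) (k : n) :
    RCLike.re (((hM.eigenvectorUnitary : Matrix n n 𝕜)ᴴ * M * hM.eigenvectorUnitary) k k) =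
      hM.eigenvalues k := by
  have h := hM.conjStarAlgAut_star_eigenvectorUnitary
  rw [Unitary.conjStarAlgAut_apply, Unitary.coe_star, star_star, star_eq_conjTranspose] at h
  simp [h]

theorem sum_eigenvalues_comp_add {A B : Matrix n n 𝕜} (hA : A.IsHermitian) (hB : B.IsHermitian)
    (hAB : (A + B).IsHermitian) (e eA eB : Equiv.Perm n) :
    ∑ i, hAB.eigenvalues (e i) = ∑ i, (hA.eigenvalues (eA i) + hB.eigenvalues (eB i)) := by
  apply RCLike.ofReal_injective (K := 𝕜)
  rw [← hAB.trace_eq_sum_eigenvalues_comp, sum_add_distrib, RCLike.ofReal_add,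
    ← hA.trace_eq_sum_eigenvalues_comp, ← hB.trace_eq_sum_eigenvalues_comp, trace_add]

variable {m : ℕ}

theorem sum_re_conjTranspose_mul_mul_apply_self_le_sum_Iic {M : Matrix (Fin m) (Fin m) 𝕜}
    (hM : M.IsHermitian) {e : Equiv.Perm (Fin m)} (he : Antitone (hM.eigenvalues ∘ e))
    {U : Matrix (Fin m) (Fin m) 𝕜} (hU : U ∈ unitaryGroup (Fin m) 𝕜) {s : Finset (Fin m)}
    {j : Fin m} (hs : #s = j + 1) :
    ∑ k ∈ s, RCLike.re ((Uᴴ * M * U) k k) ≤ ∑ i ∈ Iic j, hM.eigenvalues (e i) := by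
  set V : Matrix (Fin m) (Fin m) 𝕜 := (hM.eigenvectorUnitary : Matrix (Fin m) (Fin m) 𝕜)
  set W := Vᴴ * U
  have hW : W ∈ unitaryGroup (Fin m) 𝕜 :=
    mul_mem (star_eq_conjTranspose V ▸ Unitary.star_mem hM.eigenvectorUnitary.2) hU
  have hconj : Uᴴ * M * U = Wᴴ * diagonal (RCLike.ofReal ∘ hM.eigenvalues) * W := by
    conv_lhs => rw [hM.spectral_theorem]
    simp only [Unitary.conjStarAlgAut_apply, W, conjTranspose_mul, conjTranspose_conjTranspose,
      star_eq_conjTranspose, Matrix.mul_assoc, V]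
  set c : Fin m → ℝ := fun i => ∑ k ∈ s, ‖W i k‖ ^ 2
  have hc₁ : c ≤ 1 := fun i => calc
    c i ≤ ∑ k, ‖W i k‖ ^ 2 :=
      sum_le_sum_of_subset_of_nonneg (subset_univ s) fun _ _ _ => by positivity
    _ = 1 := sum_norm_sq_apply_right_eq_one hW i
  have hcs : ∑ i, c (e i) = #(Iic j) := by
    rw [Equiv.sum_comp e c, sum_comm]
    simp [sum_norm_sq_apply_left_eq_one hW, hs, Fin.card_Iic]
  calc ∑ k ∈ s, RCLike.re ((Uᴴ * M * U) k k) = ∑ i, c i * hM.eigenvalues i := by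
        simp only [hconj, re_conjTranspose_mul_diagonal_mul_apply_self, c, sum_mul]
        exact sum_comm
    _ = ∑ i, c (e i) * hM.eigenvalues (e i) := (Equiv.sum_comp e fun i => c i * _).symm
    _ ≤ ∑ i ∈ Iic j, hM.eigenvalues (e i) :=
        sum_mul_le_sum_of_le_one (t := hM.eigenvalues (e j))
          (fun i => sum_nonneg fun _ _ => by positivity) (fun i => hc₁ (e i)) hcs
          (fun i hi => he (mem_Iic.1 hi)) (fun i hi => he (not_le.1 (mt mem_Iic.2 hi)).le)

theorem sum_Iic_eigenvalues_comp_add_le {A B : Matrix (Fin m) (Fin m) 𝕜} (hA : A.IsHermitian)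
    (hB : B.IsHermitian) (hAB : (A + B).IsHermitian) {eA eB : Equiv.Perm (Fin m)}
    (heA : Antitone (hA.eigenvalues ∘ eA)) (heB : Antitone (hB.eigenvalues ∘ eB))
    (e : Equiv.Perm (Fin m)) (j : Fin m) :
    ∑ i ∈ Iic j, hAB.eigenvalues (e i) ≤
      ∑ i ∈ Iic j, (hA.eigenvalues (eA i) + hB.eigenvalues (eB i)) := by
  set U : Matrix (Fin m) (Fin m) 𝕜 := (hAB.eigenvectorUnitary : Matrix (Fin m) (Fin m) 𝕜)
  set s := (Iic j).map e.toEmbedding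
  have hs : #s = j + 1 := by simp [s, Fin.card_Iic]
  calc ∑ i ∈ Iic j, hAB.eigenvalues (e i) = ∑ k ∈ s, RCLike.re ((Uᴴ * (A + B) * U) k k) := by
        simp [s, U, hAB.re_conjTranspose_eigenvectorUnitary_mul_mul_apply_self]
    _ = ∑ k ∈ s, RCLike.re ((Uᴴ * A * U) k k) + ∑ k ∈ s, RCLike.re ((Uᴴ * B * U) k k) := by
        simp only [Matrix.mul_add, Matrix.add_mul, add_apply, map_add, sum_add_distrib]
    _ ≤ ∑ i ∈ Iic j, hA.eigenvalues (eA i) + ∑ i ∈ Iic j, hB.eigenvalues (eB i) :=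
        add_le_add
          (hA.sum_re_conjTranspose_mul_mul_apply_self_le_sum_Iic heA hAB.eigenvectorUnitary.2 hs)
          (hB.sum_re_conjTranspose_mul_mul_apply_self_le_sum_Iic heB hAB.eigenvectorUnitary.2 hs)
    _ = _ := sum_add_distrib.symm

end IsHermitian

end Matrix

open Matrix BigOperators ComplexOrder

theorem fiedler_lower_bound_general (N : ℕ)
    (A B : Matrix (Fin N) (Fin N) ℂ)
    (hA : A.PosSemidef) (hB : B.PosDef)
    (lamA lamB : Fin N → ℝ)
    (hlamA : Antitone lamA) (hlamB : Antitone lamB)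
    (hpermA : ∃ e : Equiv.Perm (Fin N), lamA = hA.isHermitian.eigenvalues ∘ e)
    (hpermB : ∃ e : Equiv.Perm (Fin N), lamB = hB.isHermitian.eigenvalues ∘ e) :
    ∏ i, (1 + lamA i / lamB i) ≤ ((1 + A * B⁻¹).det).re ∧
      ((1 + A * B⁻¹).det).im = 0 ∧
      (1 + A * B⁻¹).det = (B + A).det / B.det := by
  obtain ⟨eA, rfl⟩ := hpermA
  obtain ⟨eB, rfl⟩ := hpermB
  have hBA : (B + A).PosDef := hB.add_posSemidef hA
  obtain ⟨eC, hlamC⟩ := Tuple.exists_perm_antitone hBA.isHermitian.eigenvalues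
  set a := hA.isHermitian.eigenvalues
  set b := hB.isHermitian.eigenvalues
  set c := hBA.isHermitian.eigenvalues
  have hb : ∀ i, 0 < b (eB i) := fun i => hB.eigenvalues_pos _
  have hprod : ∏ i, (b (eB i) + a (eA i)) ≤ ∏ i, c (eC i) :=
    Fin.prod_le_prod_of_sum_Iic_le hlamC (fun i => hBA.eigenvalues_pos _)
      (fun i => add_nonneg (hb i).le (hA.eigenvalues_nonneg _))
      (hB.isHermitian.sum_Iic_eigenvalues_comp_add_le hA.isHermitian _ hlamB hlamA eC)
      (hB.isHermitian.sum_eigenvalues_comp_add hA.isHermitian _ eC eB eA)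
  have hdet : (1 + A * B⁻¹).det = (B + A).det / B.det :=
    det_one_add_mul_inv A B ((isUnit_iff_isUnit_det B).1 hB.isUnit)
  have hdet_real : (1 + A * B⁻¹).det = (((∏ i, c (eC i)) / ∏ i, b (eB i) : ℝ) : ℂ) := by
    rw [hdet, hBA.isHermitian.det_eq_prod_eigenvalues_comp eC,
      hB.isHermitian.det_eq_prod_eigenvalues_comp eB, Complex.ofReal_div]
    rfl
  refine ⟨?_, by rw [hdet_real, Complex.ofReal_im], hdet⟩
  calc ∏ i, (1 + a (eA i) / b (eB i)) = (∏ i, (b (eB i) + a (eA i))) / ∏ i, b (eB i) := by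
        rw [← prod_div_distrib]
        exact prod_congr rfl fun i _ => one_add_div (hb i).ne'
    _ ≤ (∏ i, c (eC i)) / ∏ i, b (eB i) :=
        div_le_div_of_nonneg_right hprod (prod_pos fun i _ => hb i).le
    _ = ((1 + A * B⁻¹).det).re := by rw [hdet_real, Complex.ofReal_re]

/-- Fiedler-type lower bound: for Hermitian `A` positive semidefinite and `B`
positive definite with eigenvalues listed in decreasing order,
`∏ i (1 + λ_i(A)/λ_i(B)) ≤ det (I + A B⁻¹)`, the latter being a real number
equal to `det (B + A) / det B`. -/
theorem fiedler_lower_bound (N : ℕ) (hN : 1 ≤ N)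
    (A B : Matrix (Fin N) (Fin N) ℂ)
    (hA : A.PosSemidef) (hB : B.PosDef)
    (lamA lamB : Fin N → ℝ)
    (hlamA : Antitone lamA) (hlamB : Antitone lamB)
    (hpermA : ∃ e : Equiv.Perm (Fin N), lamA = hA.isHermitian.eigenvalues ∘ e)
    (hpermB : ∃ e : Equiv.Perm (Fin N), lamB = hB.isHermitian.eigenvalues ∘ e) :
    ∏ i, (1 + lamA i / lamB i) ≤ ((1 + A * B⁻¹).det).re ∧
      ((1 + A * B⁻¹).det).im = 0 ∧
      (1 + A * B⁻¹).det = (B + A).det / B.det :=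
  fiedler_lower_bound_general N A B hA hB lamA lamB hlamA hlamB hpermA hpermB
end

section
/- Let A be an N×M complex matrix (viewed as a linear map from the Euclidean space ℂ^M to the Euclidean space ℂ^N), and let σ ≥ 0 be such that ‖Aᴴu‖ ≥ σ‖u‖ for every u ∈ ℂ^N, where Aᴴ is the conjugate transpose. Let T ≥ 0 with σ ≤ √T. Then for every h ∈ ℂ^N with ‖h‖ ≤ √T there exists θ ∈ ℂ^M with ‖θ‖ ≤ 1 such that ‖h + A·θ‖ ≤ √T − σ. -/
/-!
For `σ > 0` the bound `‖Aᴴ u‖ ≥ σ ‖u‖` makes `Aᴴ` injective, so `A Aᴴ` is invertible and every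
`v` is `A θ` with `θ = Aᴴ w`. Then `‖θ‖² = Re ⟪w, v⟫ ≤ ‖w‖ ‖v‖ ≤ ‖θ‖ ‖v‖ / σ`, so `σ ‖θ‖ ≤ ‖v‖`:
the image of the unit ball under `A` contains the ball of radius `σ`. Cancelling `h` then amounts
to moving it a distance `σ` towards `0`, which leaves a residual of norm at most `√T - σ`.
-/

open Matrix

theorem exists_norm_le_and_norm_add_le_sub {E : Type*} [NormedAddCommGroup E] [NormedSpace ℝ E]
    {r c : ℝ} (hc : 0 ≤ c) (hcr : c ≤ r) {h : E} (hh : ‖h‖ ≤ r) :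
    ∃ v : E, ‖v‖ ≤ c ∧ ‖h + v‖ ≤ r - c := by
  rcases le_or_gt ‖h‖ c with hhc | hch
  · exact ⟨-h, by rwa [norm_neg], by simpa using sub_nonneg.mpr hcr⟩
  have hh0 : ‖h‖ ≠ 0 := by linarith [norm_nonneg h]
  have hshrink : h + -(c / ‖h‖) • h = (1 - c / ‖h‖) • h := by module
  have hcoef : 0 ≤ 1 - c / ‖h‖ := sub_nonneg.mpr ((div_le_one₀ (by positivity)).mpr hch.le)
  refine ⟨-(c / ‖h‖) • h, ?_, ?_⟩
  · rw [norm_smul, norm_neg, Real.norm_of_nonneg (by positivity), div_mul_cancel₀ _ hh0]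
  · rw [hshrink, norm_smul, Real.norm_of_nonneg hcoef, sub_mul, one_mul, div_mul_cancel₀ _ hh0]
    linarith

namespace LinearMap

variable {𝕜 E F : Type*} [RCLike 𝕜]
  [NormedAddCommGroup E] [InnerProductSpace 𝕜 E] [FiniteDimensional 𝕜 E]
  [NormedAddCommGroup F] [InnerProductSpace 𝕜 F] [FiniteDimensional 𝕜 F]

theorem injective_adjoint_of_mul_norm_le {B : E →ₗ[𝕜] F} {σ : ℝ} (hσ : 0 < σ)
    (hB : ∀ u, σ * ‖u‖ ≤ ‖B.adjoint u‖) : Function.Injective B.adjoint := by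
  rw [← ker_eq_bot, ker_eq_bot']
  intro u hu
  have := hB u
  rw [hu, norm_zero] at this
  exact norm_le_zero_iff.mp (nonpos_of_mul_nonpos_right this hσ)

theorem exists_apply_eq_mul_norm_le {B : E →ₗ[𝕜] F} {σ : ℝ} (hσ : 0 < σ)
    (hB : ∀ u, σ * ‖u‖ ≤ ‖B.adjoint u‖) (v : F) :
    ∃ θ : E, B θ = v ∧ σ * ‖θ‖ ≤ ‖v‖ := by
  have hsurj : Function.Surjective (B ∘ₗ B.adjoint) := by
    rw [← injective_iff_surjective, coe_comp, self_comp_adjoint_injective_iff]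
    exact injective_adjoint_of_mul_norm_le hσ hB
  obtain ⟨w, hw⟩ := hsurj v
  set θ := B.adjoint w
  refine ⟨θ, hw, ?_⟩
  have hnorm_sq : ‖θ‖ ^ 2 ≤ ‖w‖ * ‖v‖ :=
    calc ‖θ‖ ^ 2 = RCLike.re (inner 𝕜 w v) := by
          rw [← hw, comp_apply, ← adjoint_inner_left, inner_self_eq_norm_sq]
      _ ≤ ‖w‖ * ‖v‖ := re_inner_le_norm _ _
  have hkey : ‖θ‖ * (σ * ‖θ‖) ≤ ‖θ‖ * ‖v‖ := by nlinarith [hB w, norm_nonneg v]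
  rcases (norm_nonneg θ).eq_or_lt with hθ | hθ
  · rw [← hθ, mul_zero]
    exact norm_nonneg v
  · exact le_of_mul_le_mul_left hkey hθ

end LinearMap

theorem exists_cancellation_general (N M : ℕ) (A : Matrix (Fin N) (Fin M) ℂ)
    (σ T : ℝ) (hσT : σ ≤ Real.sqrt T)
    (hmin : ∀ u : EuclideanSpace ℂ (Fin N), σ * ‖u‖ ≤ ‖Matrix.toEuclideanLin Aᴴ u‖) :
    ∀ h : EuclideanSpace ℂ (Fin N), ‖h‖ ≤ Real.sqrt T →
      ∃ θ : EuclideanSpace ℂ (Fin M), ‖θ‖ ≤ 1 ∧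
        ‖h + Matrix.toEuclideanLin A θ‖ ≤ Real.sqrt T - σ := by
  intro h hh
  rcases le_or_gt σ 0 with hσ | hσ
  · exact ⟨0, by simp, by simpa using hh.trans (by linarith)⟩
  obtain ⟨v, hv, hhv⟩ := exists_norm_le_and_norm_add_le_sub hσ.le hσT hh
  rw [toEuclideanLin_conjTranspose_eq_adjoint] at hmin
  obtain ⟨θ, rfl, hθ⟩ := LinearMap.exists_apply_eq_mul_norm_le hσ hmin v
  exact ⟨θ, le_of_mul_le_mul_left (by linarith) hσ, hhv⟩

/-- If `σ` lower-bounds the smallest singular value of `A` (i.e. `‖Aᴴ u‖ ≥ σ ‖u‖`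
for all `u`) and `σ ≤ √T`, then any `h` with `‖h‖ ≤ √T` can be cancelled down to
residual norm `√T − σ` using some `θ` in the unit ball. -/
theorem exists_cancellation (N M : ℕ) (A : Matrix (Fin N) (Fin M) ℂ)
    (σ T : ℝ) (hσ : 0 ≤ σ) (hT : 0 ≤ T) (hσT : σ ≤ Real.sqrt T)
    (hmin : ∀ u : EuclideanSpace ℂ (Fin N), σ * ‖u‖ ≤ ‖Matrix.toEuclideanLin Aᴴ u‖) :
    ∀ h : EuclideanSpace ℂ (Fin N), ‖h‖ ≤ Real.sqrt T →
      ∃ θ : EuclideanSpace ℂ (Fin M), ‖θ‖ ≤ 1 ∧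
        ‖h + Matrix.toEuclideanLin A θ‖ ≤ Real.sqrt T - σ :=
  exists_cancellation_general N M A σ T hσT hmin
end

section
/- Let A be an N×M complex matrix (viewed as a linear map from the Euclidean space ℂ^M to the Euclidean space ℂ^N), and let σ ≥ 0 be such that ‖Aᴴu‖ ≥ σ‖u‖ for every u ∈ ℂ^N. Let T ≥ 0 with σ ≤ √T. Then the worst-case residual after optimal cancellation satisfies: sup over all h ∈ ℂ^N with ‖h‖² ≤ T of (inf over all θ ∈ ℂ^M with ‖θ‖ ≤ 1 of ‖h + A·θ‖²) ≤ (√T − σ)². -/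
/-!
The minimum-norm solution `θ = L† u` of `L θ = y`, with `L L† u = y`, satisfies
`‖θ‖² = re ⟪u, y⟫ ≤ ‖u‖ ‖y‖ ≤ ‖θ‖ ‖y‖ / σ`, so `L` maps the unit ball onto a set containing
the ball of radius `σ`. Splitting `‖h‖ ≤ (√T - σ) + σ` as a sum of two balls, the part of `h` in
the ball of radius `σ` is cancelled exactly and the residual has norm at most `√T - σ`.
-/

open Matrix Metric Pointwise

namespace LinearMap

variable {𝕜 E F : Type*} [RCLike 𝕜] [NormedAddCommGroup E] [InnerProductSpace 𝕜 E]
  [NormedAddCommGroup F] [InnerProductSpace 𝕜 F] [FiniteDimensional 𝕜 E] [FiniteDimensional 𝕜 F]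

theorem exists_apply_eq_and_mul_norm_le_of_adjoint (L : E →ₗ[𝕜] F) {σ : ℝ} (hσ : 0 < σ)
    (hL : ∀ u, σ * ‖u‖ ≤ ‖L.adjoint u‖) (y : F) : ∃ x, L x = y ∧ σ * ‖x‖ ≤ ‖y‖ := by
  have hinj : Function.Injective L.adjoint := by
    refine (injective_iff_map_eq_zero _).2 fun u hu => norm_eq_zero.1 ?_
    have := hL u
    rw [hu, norm_zero] at this
    nlinarith [norm_nonneg u]
  have hsurj : Function.Surjective (L ∘ₗ L.adjoint) := by
    rw [← injective_iff_surjective, ← ker_eq_bot, ker_self_comp_adjoint, ker_eq_bot]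
    exact hinj
  obtain ⟨u, hu⟩ := hsurj y
  set x := L.adjoint u
  have hx : L x = y := hu
  refine ⟨x, hx, ?_⟩
  have hsq : ‖x‖ ^ 2 ≤ ‖u‖ * ‖y‖ := by
    rw [← inner_self_eq_norm_sq (𝕜 := 𝕜), adjoint_inner_left, hx]
    exact re_inner_le_norm _ _
  rcases (norm_nonneg x).eq_or_lt with hx0 | hx0
  · rw [← hx0, mul_zero]
    exact norm_nonneg y
  · refine le_of_mul_le_mul_left ?_ hx0
    nlinarith [hL u, norm_nonneg y]

theorem closedBall_subset_image_closedBall_of_adjoint (L : E →ₗ[𝕜] F) {σ : ℝ}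
    (hL : ∀ u, σ * ‖u‖ ≤ ‖L.adjoint u‖) : closedBall (0 : F) σ ⊆ L '' closedBall 0 1 := by
  intro y hy
  rw [mem_closedBall_zero_iff] at hy
  rcases le_or_gt σ 0 with hσ | hσ
  · have hy0 : y = 0 := norm_le_zero_iff.1 (hy.trans hσ)
    exact ⟨0, by simp, by simp [hy0]⟩
  · obtain ⟨x, rfl, hx⟩ := L.exists_apply_eq_and_mul_norm_le_of_adjoint hσ hL y
    refine ⟨x, mem_closedBall_zero_iff.2 ?_, rfl⟩
    nlinarith

end LinearMap

theorem exists_norm_sub_le_of_closedBall_subset_image {α F : Type*} [NormedAddCommGroup F]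
    [NormedSpace ℝ F] [ProperSpace F] {f : α → F} {s : Set α} {σ r : ℝ} (hσ : 0 ≤ σ)
    (hr : 0 ≤ r) (hf : closedBall 0 σ ⊆ f '' s) {y : F} (hy : ‖y‖ ≤ r + σ) :
    ∃ x ∈ s, ‖y - f x‖ ≤ r := by
  rw [← mem_closedBall_zero_iff, ← add_zero (0 : F), ← closedBall_add_closedBall hr hσ] at hy
  obtain ⟨z, hz, w, hw, rfl⟩ := hy
  obtain ⟨x, hx, rfl⟩ := hf hw
  exact ⟨x, hx, by simpa using hz⟩

theorem worst_case_residual_bound_general (N M : ℕ) (A : Matrix (Fin N) (Fin M) ℂ)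
    (σ T : ℝ) (hσ : 0 ≤ σ) (hσT : σ ≤ Real.sqrt T)
    (hmin : ∀ u : EuclideanSpace ℂ (Fin N), σ * ‖u‖ ≤ ‖Matrix.toEuclideanLin Aᴴ u‖) :
    (⨆ h : {h : EuclideanSpace ℂ (Fin N) // ‖h‖ ^ 2 ≤ T},
        ⨅ θ : {θ : EuclideanSpace ℂ (Fin M) // ‖θ‖ ≤ 1},
          ‖(h : EuclideanSpace ℂ (Fin N)) + Matrix.toEuclideanLin A θ‖ ^ 2) ≤
      (Real.sqrt T - σ) ^ 2 := by
  set L := Matrix.toEuclideanLin A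
  have hball : closedBall 0 σ ⊆ L '' closedBall 0 1 := by
    apply L.closedBall_subset_image_closedBall_of_adjoint
    intro u
    rw [← toEuclideanLin_conjTranspose_eq_adjoint]
    exact hmin u
  refine Real.iSup_le (fun ⟨h, hh⟩ => ?_) (sq_nonneg _)
  have hnorm : ‖-h‖ ≤ (√T - σ) + σ := by
    rw [norm_neg, sub_add_cancel]
    exact Real.le_sqrt_of_sq_le hh
  obtain ⟨θ, hθ, hres⟩ :=
    exists_norm_sub_le_of_closedBall_subset_image hσ (sub_nonneg.2 hσT) hball hnorm
  rw [← neg_add', norm_neg] at hres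
  have hbdd : BddBelow (Set.range fun θ : {θ : EuclideanSpace ℂ (Fin M) // ‖θ‖ ≤ 1} =>
      ‖h + L θ‖ ^ 2) := ⟨0, by rintro _ ⟨_, rfl⟩; positivity⟩
  exact (ciInf_le hbdd ⟨θ, mem_closedBall_zero_iff.1 hθ⟩).trans (by gcongr)

/-- Closed-form upper bound for the worst-case residual after optimal IRS
cancellation: `sup_{‖h‖² ≤ T} inf_{‖θ‖ ≤ 1} ‖h + A θ‖² ≤ (√T − σ)²`,
where `σ` lower-bounds the smallest singular value of `A`. -/
theorem worst_case_residual_bound (N M : ℕ) (A : Matrix (Fin N) (Fin M) ℂ)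
    (σ T : ℝ) (hσ : 0 ≤ σ) (hT : 0 ≤ T) (hσT : σ ≤ Real.sqrt T)
    (hmin : ∀ u : EuclideanSpace ℂ (Fin N), σ * ‖u‖ ≤ ‖Matrix.toEuclideanLin Aᴴ u‖) :
    (⨆ h : {h : EuclideanSpace ℂ (Fin N) // ‖h‖ ^ 2 ≤ T},
        ⨅ θ : {θ : EuclideanSpace ℂ (Fin M) // ‖θ‖ ≤ 1},
          ‖(h : EuclideanSpace ℂ (Fin N)) + Matrix.toEuclideanLin A θ‖ ^ 2) ≤
      (Real.sqrt T - σ) ^ 2 :=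
  worst_case_residual_bound_general N M A σ T hσ hσT hmin
end

section
/- Let Q be an N×N complex Hermitian positive semidefinite matrix with trace(Q) ≤ P, let H be a K×N complex matrix with trace(HᴴH) ≤ T, and let D be a K×K complex Hermitian positive semidefinite matrix. Then for every index i (1 ≤ i ≤ K), the i-th largest eigenvalue of H·Q·Hᴴ + D satisfies λ_i(H·Q·Hᴴ + D) ≤ T·P + λ_i(D), where eigenvalues are listed in decreasing order. -/
open Matrix ComplexOrder

open scoped InnerProductSpace

/-!
Weyl's argument. Let `S = H Q Hᴴ + D`. The span of eigenvectors of `S` for its `i + 1` largest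
eigenvalues and the span of eigenvectors of `D` for its `K - i` smallest eigenvalues have
dimensions adding up to `K + 1`, so they share a nonzero vector `x`. On it
`λᵢ(S) ‖x‖² ≤ x* S x = (Hᴴx)* Q (Hᴴx) + x* D x ≤ tr Q ‖Hᴴx‖² + λᵢ(D) ‖x‖²`,
and `‖Hᴴx‖² = x* H Hᴴ x ≤ tr(Hᴴ H) ‖x‖²` since a positive semidefinite matrix is dominated by its
trace.
-/

namespace OrthonormalBasis

variable {ι 𝕜 E : Type*} [Fintype ι] [RCLike 𝕜] [NormedAddCommGroup E] [InnerProductSpace 𝕜 E]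

theorem inner_eq_zero_of_mem_span_image (b : OrthonormalBasis ι 𝕜 E) {s : Set ι} {x : E}
    (hx : x ∈ Submodule.span 𝕜 (b '' s)) {j : ι} (hj : j ∉ s) : ⟪b j, x⟫_𝕜 = 0 := by
  refine Submodule.mem_orthogonal_singleton_iff_inner_right.mp (Submodule.span_le.mpr ?_ hx)
  rintro _ ⟨k, hk, rfl⟩
  exact Submodule.mem_orthogonal_singleton_iff_inner_right.mpr
    (b.orthonormal.2 fun hjk => hj (hjk ▸ hk))

theorem finrank_span_image (b : OrthonormalBasis ι 𝕜 E) (s : Finset ι) :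
    Module.finrank 𝕜 (Submodule.span 𝕜 (b '' s)) = s.card := by
  have hli : LinearIndependent 𝕜 (fun j : (s : Set ι) => b j) :=
    b.orthonormal.linearIndependent.comp _ Subtype.val_injective
  rw [Set.image_eq_range, finrank_span_eq_card hli]
  simp

end OrthonormalBasis

namespace Matrix.IsHermitian

variable {𝕜 n : Type*} [RCLike 𝕜] [Fintype n] [DecidableEq n] {A : Matrix n n 𝕜}
  (hA : A.IsHermitian)

theorem inner_eigenvectorBasis_toEuclideanLin (j : n) (x : EuclideanSpace 𝕜 n) :
    ⟪hA.eigenvectorBasis j, A.toEuclideanLin x⟫_𝕜 =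
      hA.eigenvalues j * ⟪hA.eigenvectorBasis j, x⟫_𝕜 := by
  have hb : A.toEuclideanLin (hA.eigenvectorBasis j) =
      (hA.eigenvalues j : 𝕜) • hA.eigenvectorBasis j := by
    rw [toLpLin_apply, hA.mulVec_eigenvectorBasis, RCLike.real_smul_eq_coe_smul (K := 𝕜)]
    rfl
  rw [← isSymmetric_toEuclideanLin_iff.mpr hA, hb, inner_smul_left, RCLike.conj_ofReal]

theorem re_inner_toEuclideanLin_self (x : EuclideanSpace 𝕜 n) :
    RCLike.re ⟪x, A.toEuclideanLin x⟫_𝕜 =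
      ∑ j, hA.eigenvalues j * ‖⟪hA.eigenvectorBasis j, x⟫_𝕜‖ ^ 2 := by
  rw [← hA.eigenvectorBasis.sum_inner_mul_inner, map_sum]
  refine Finset.sum_congr rfl fun j _ => ?_
  rw [hA.inner_eigenvectorBasis_toEuclideanLin, mul_left_comm, RCLike.re_ofReal_mul,
    ← inner_conj_symm, RCLike.conj_mul, ← RCLike.ofReal_pow, RCLike.ofReal_re]

theorem re_inner_toEuclideanLin_self_le_of_mem_span {s : Set n} {a : ℝ}
    (hs : ∀ j ∈ s, hA.eigenvalues j ≤ a) {x : EuclideanSpace 𝕜 n}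
    (hx : x ∈ Submodule.span 𝕜 (hA.eigenvectorBasis '' s)) :
    RCLike.re ⟪x, A.toEuclideanLin x⟫_𝕜 ≤ a * ‖x‖ ^ 2 := by
  rw [hA.re_inner_toEuclideanLin_self, ← hA.eigenvectorBasis.sum_sq_norm_inner_right,
    Finset.mul_sum]
  refine Finset.sum_le_sum fun j _ => ?_
  by_cases hj : j ∈ s
  · exact mul_le_mul_of_nonneg_right (hs j hj) (sq_nonneg _)
  · simp [hA.eigenvectorBasis.inner_eq_zero_of_mem_span_image hx hj]

theorem le_re_inner_toEuclideanLin_self_of_mem_span {s : Set n} {a : ℝ}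
    (hs : ∀ j ∈ s, a ≤ hA.eigenvalues j) {x : EuclideanSpace 𝕜 n}
    (hx : x ∈ Submodule.span 𝕜 (hA.eigenvectorBasis '' s)) :
    a * ‖x‖ ^ 2 ≤ RCLike.re ⟪x, A.toEuclideanLin x⟫_𝕜 := by
  rw [hA.re_inner_toEuclideanLin_self, ← hA.eigenvectorBasis.sum_sq_norm_inner_right,
    Finset.mul_sum]
  refine Finset.sum_le_sum fun j _ => ?_
  by_cases hj : j ∈ s
  · exact mul_le_mul_of_nonneg_right (hs j hj) (sq_nonneg _)
  · simp [hA.eigenvectorBasis.inner_eq_zero_of_mem_span_image hx hj]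

end Matrix.IsHermitian

theorem Matrix.PosSemidef.re_inner_toEuclideanLin_self_le_trace {𝕜 n : Type*} [RCLike 𝕜]
    [Fintype n] [DecidableEq n] {A : Matrix n n 𝕜} (hA : A.PosSemidef) (x : EuclideanSpace 𝕜 n) :
    RCLike.re ⟪x, A.toEuclideanLin x⟫_𝕜 ≤ RCLike.re A.trace * ‖x‖ ^ 2 := by
  rw [hA.isHermitian.re_inner_toEuclideanLin_self, hA.isHermitian.trace_eq_sum_eigenvalues,
    map_sum, Finset.sum_mul]
  refine Finset.sum_le_sum fun j _ => ?_
  rw [RCLike.ofReal_re]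
  refine mul_le_mul_of_nonneg_left (pow_le_pow_left₀ (norm_nonneg _) ?_ 2)
    (hA.eigenvalues_nonneg j)
  simpa using norm_inner_le_norm (𝕜 := 𝕜) (hA.isHermitian.eigenvectorBasis j) x

namespace Matrix

variable {𝕜 : Type*} [RCLike 𝕜]

theorem re_inner_toEuclideanLin_mul_mul_conjTranspose_le {m n : Type*} [Fintype m]
    [DecidableEq m] [Fintype n] [DecidableEq n] {Q : Matrix n n 𝕜} (hQ : Q.PosSemidef)
    (H : Matrix m n 𝕜) (x : EuclideanSpace 𝕜 m) :
    RCLike.re ⟪x, (H * Q * Hᴴ).toEuclideanLin x⟫_𝕜 ≤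
      RCLike.re (Hᴴ * H).trace * RCLike.re Q.trace * ‖x‖ ^ 2 := by
  have hadj : ∀ y, ⟪x, H.toEuclideanLin y⟫_𝕜 = ⟪Hᴴ.toEuclideanLin x, y⟫_𝕜 := fun y => by
    rw [toEuclideanLin_conjTranspose_eq_adjoint, LinearMap.adjoint_inner_left]
  have hHx : ‖Hᴴ.toEuclideanLin x‖ ^ 2 ≤ RCLike.re (Hᴴ * H).trace * ‖x‖ ^ 2 := by
    rw [← trace_mul_comm, ← inner_self_eq_norm_sq (𝕜 := 𝕜), ← hadj, ← LinearMap.comp_apply,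
      ← toLpLin_mul_same]
    exact (posSemidef_self_mul_conjTranspose H).re_inner_toEuclideanLin_self_le_trace x
  have htrQ : 0 ≤ RCLike.re Q.trace := (RCLike.nonneg_iff.mp hQ.trace_nonneg).1
  calc RCLike.re ⟪x, (H * Q * Hᴴ).toEuclideanLin x⟫_𝕜
      = RCLike.re ⟪Hᴴ.toEuclideanLin x, Q.toEuclideanLin (Hᴴ.toEuclideanLin x)⟫_𝕜 := by
        rw [toLpLin_mul_same, toLpLin_mul_same, LinearMap.comp_apply, LinearMap.comp_apply, hadj]
    _ ≤ RCLike.re Q.trace * ‖Hᴴ.toEuclideanLin x‖ ^ 2 :=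
        hQ.re_inner_toEuclideanLin_self_le_trace _
    _ ≤ RCLike.re Q.trace * (RCLike.re (Hᴴ * H).trace * ‖x‖ ^ 2) :=
        mul_le_mul_of_nonneg_left hHx htrQ
    _ = RCLike.re (Hᴴ * H).trace * RCLike.re Q.trace * ‖x‖ ^ 2 := by ring

namespace IsHermitian

variable {n : ℕ} {A : Matrix (Fin n) (Fin n) 𝕜} (hA : A.IsHermitian) {μ : Fin n → ℝ}

theorem exists_finrank_eq_succ_le_re_inner_toEuclideanLin (hμ : Antitone μ)
    (he : ∃ e : Equiv.Perm (Fin n), μ = hA.eigenvalues ∘ e) (i : Fin n) :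
    ∃ V : Submodule 𝕜 (EuclideanSpace 𝕜 (Fin n)), Module.finrank 𝕜 V = i + 1 ∧
      ∀ x ∈ V, μ i * ‖x‖ ^ 2 ≤ RCLike.re ⟪x, A.toEuclideanLin x⟫_𝕜 := by
  obtain ⟨e, rfl⟩ := he
  refine ⟨Submodule.span 𝕜 (hA.eigenvectorBasis '' ((Finset.Iic i).image e)), ?_,
    fun x hx => hA.le_re_inner_toEuclideanLin_self_of_mem_span ?_ hx⟩
  · rw [hA.eigenvectorBasis.finrank_span_image, Finset.card_image_of_injective _ e.injective,
      Fin.card_Iic]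
  · simp only [Finset.coe_image, Set.mem_image, Finset.mem_coe, Finset.mem_Iic]
    rintro _ ⟨k, hk, rfl⟩
    exact hμ hk

theorem exists_finrank_eq_sub_re_inner_toEuclideanLin_le (hμ : Antitone μ)
    (he : ∃ e : Equiv.Perm (Fin n), μ = hA.eigenvalues ∘ e) (i : Fin n) :
    ∃ W : Submodule 𝕜 (EuclideanSpace 𝕜 (Fin n)), Module.finrank 𝕜 W = n - i ∧
      ∀ x ∈ W, RCLike.re ⟪x, A.toEuclideanLin x⟫_𝕜 ≤ μ i * ‖x‖ ^ 2 := by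
  obtain ⟨e, rfl⟩ := he
  refine ⟨Submodule.span 𝕜 (hA.eigenvectorBasis '' ((Finset.Ici i).image e)), ?_,
    fun x hx => hA.re_inner_toEuclideanLin_self_le_of_mem_span ?_ hx⟩
  · rw [hA.eigenvectorBasis.finrank_span_image, Finset.card_image_of_injective _ e.injective,
      Fin.card_Ici]
  · simp only [Finset.coe_image, Set.mem_image, Finset.mem_coe, Finset.mem_Ici]
    rintro _ ⟨k, hk, rfl⟩
    exact hμ hk

end IsHermitian

theorem antitone_eigenvalues_add_le {n : ℕ} {A D : Matrix (Fin n) (Fin n) 𝕜}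
    (hS : (A + D).IsHermitian) (hD : D.IsHermitian) {c : ℝ}
    (hA : ∀ x, RCLike.re ⟪x, A.toEuclideanLin x⟫_𝕜 ≤ c * ‖x‖ ^ 2) {μ ν : Fin n → ℝ}
    (hμ : Antitone μ) (hν : Antitone ν) (hμe : ∃ e : Equiv.Perm (Fin n), μ = hS.eigenvalues ∘ e)
    (hνe : ∃ e : Equiv.Perm (Fin n), ν = hD.eigenvalues ∘ e) (i : Fin n) :
    μ i ≤ c + ν i := by
  obtain ⟨V, hVrank, hV⟩ := hS.exists_finrank_eq_succ_le_re_inner_toEuclideanLin hμ hμe i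
  obtain ⟨W, hWrank, hW⟩ := hD.exists_finrank_eq_sub_re_inner_toEuclideanLin_le hν hνe i
  obtain ⟨x, hxV, hxW, hx0⟩ : ∃ x ∈ V, x ∈ W ∧ x ≠ 0 := by
    by_contra! h
    have := Submodule.finrank_add_finrank_le_of_disjoint (Submodule.disjoint_def.mpr h)
    rw [hVrank, hWrank, finrank_euclideanSpace_fin] at this
    omega
  have hx : 0 < ‖x‖ ^ 2 := by positivity
  refine le_of_mul_le_mul_right ?_ hx
  calc μ i * ‖x‖ ^ 2 ≤ RCLike.re ⟪x, (A + D).toEuclideanLin x⟫_𝕜 := hV x hxV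
    _ = RCLike.re ⟪x, A.toEuclideanLin x⟫_𝕜 + RCLike.re ⟪x, D.toEuclideanLin x⟫_𝕜 := by
        rw [map_add, LinearMap.add_apply, inner_add_right, map_add]
    _ ≤ c * ‖x‖ ^ 2 + ν i * ‖x‖ ^ 2 := add_le_add (hA x) (hW x hxW)
    _ = (c + ν i) * ‖x‖ ^ 2 := by ring

end Matrix

theorem eigenvalue_perturbation_bound_general (N K : ℕ)
    (Q : Matrix (Fin N) (Fin N) ℂ) (hQ : Q.PosSemidef)
    (H : Matrix (Fin K) (Fin N) ℂ)
    (D : Matrix (Fin K) (Fin K) ℂ) (hD : D.PosSemidef)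
    (T P : ℝ) (hT : 0 ≤ T)
    (htrH : (Hᴴ * H).trace.re ≤ T) (htrQ : Q.trace.re ≤ P)
    (hS : (H * Q * Hᴴ + D).IsHermitian)
    (μ ν : Fin K → ℝ) (hμ : Antitone μ) (hν : Antitone ν)
    (hμperm : ∃ e : Equiv.Perm (Fin K), μ = hS.eigenvalues ∘ e)
    (hνperm : ∃ e : Equiv.Perm (Fin K), ν = hD.isHermitian.eigenvalues ∘ e) :
    ∀ i, μ i ≤ T * P + ν i := by
  have hQtr : 0 ≤ Q.trace.re := (RCLike.nonneg_iff.mp hQ.trace_nonneg).1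
  refine antitone_eigenvalues_add_le hS hD.isHermitian (fun x => ?_) hμ hν hμperm hνperm
  calc RCLike.re ⟪x, (H * Q * Hᴴ).toEuclideanLin x⟫_ℂ
      ≤ (Hᴴ * H).trace.re * Q.trace.re * ‖x‖ ^ 2 :=
        re_inner_toEuclideanLin_mul_mul_conjTranspose_le hQ H x
    _ ≤ T * P * ‖x‖ ^ 2 :=
        mul_le_mul_of_nonneg_right (mul_le_mul htrH htrQ hQtr hT) (sq_nonneg _)

/-- For `Q` PSD with `trace(Q) ≤ P`, `H` with `trace(HᴴH) ≤ T`, and `D` PSD, the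
decreasingly-ordered eigenvalues satisfy `λ_i(H Q Hᴴ + D) ≤ T·P + λ_i(D)`. -/
theorem eigenvalue_perturbation_bound (N K : ℕ)
    (Q : Matrix (Fin N) (Fin N) ℂ) (hQ : Q.PosSemidef)
    (H : Matrix (Fin K) (Fin N) ℂ)
    (D : Matrix (Fin K) (Fin K) ℂ) (hD : D.PosSemidef)
    (T P : ℝ) (hT : 0 ≤ T) (hP : 0 ≤ P)
    (htrH : (Hᴴ * H).trace.re ≤ T) (htrQ : Q.trace.re ≤ P)
    (hS : (H * Q * Hᴴ + D).IsHermitian)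
    (μ ν : Fin K → ℝ) (hμ : Antitone μ) (hν : Antitone ν)
    (hμperm : ∃ e : Equiv.Perm (Fin K), μ = hS.eigenvalues ∘ e)
    (hνperm : ∃ e : Equiv.Perm (Fin K), ν = hD.isHermitian.eigenvalues ∘ e) :
    ∀ i, μ i ≤ T * P + ν i :=
  eigenvalue_perturbation_bound_general N K Q hQ H D hD T P hT htrH htrQ hS μ ν hμ hν hμperm hνperm
end

section
/- Let K ≥ 1, σ² > 0, and let A and C be K×K complex Hermitian positive semidefinite matrices with eigenvalues λ₁(A) ≥ … ≥ λ_K(A) and λ₁(C) ≥ … ≥ λ_K(C) listed in decreasing order. Then det(σ²·I + A + C) / det(σ²·I + C) ≥ ∏_{i=1}^K (1 + λ_i(A)/(σ² + λ_i(C))); equivalently, log₂ det(σ²I + A + C) − log₂ det(σ²I + C) ≥ Σ_{i=1}^K log₂(1 + λ_i(A)/(σ² + λ_i(C))). -/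
/-!
Write `s = σ²` and `x` for the eigenvalues of `A + C` in decreasing order. Since
`det (s + B) = ∏ (s + λᵢ(B))`, the claim is `∏ (s + λᵢ(A) + λᵢ(C)) ≤ ∏ (s + xᵢ)`.

Ky Fan's maximum principle (the diagonal of `B` in `k` orthonormal vectors sums to at most the
`k` largest eigenvalues of `B`), applied to `A` and to `C` in the eigenbasis of `A + C`, shows that
`x` is majorized by `y = λ(A) + λ(C)`; the totals agree because the trace is additive. Concavity
of `log` then finishes: `log (s + yᵢ) - log (s + xᵢ) ≤ (yᵢ - xᵢ) / (s + xᵢ)`, and by Abel summation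
against the increasing weights `1 / (s + xᵢ)` the right-hand sides sum to at most `0`.
-/

open Finset RCLike Matrix ComplexOrder
open scoped InnerProductSpace

theorem sum_mul_le_sum_of_separated {ι : Type*} [Fintype ι] (P : Finset ι) {μ w : ι → ℝ}
    {c : ℝ} (hP : ∀ i ∈ P, c ≤ μ i) (hPc : ∀ i ∉ P, μ i ≤ c) (hw₀ : ∀ i, 0 ≤ w i)
    (hw₁ : ∀ i, w i ≤ 1) (hw : ∑ i, w i = #P) :
    ∑ i, μ i * w i ≤ ∑ i ∈ P, μ i := by
  classical
  have key : ∀ i, (μ i - c) * (w i - if i ∈ P then 1 else 0) ≤ 0 := by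
    intro i
    by_cases hi : i ∈ P
    · simpa [hi] using
        mul_nonpos_of_nonneg_of_nonpos (sub_nonneg.2 (hP i hi)) (sub_nonpos.2 (hw₁ i))
    · simpa [hi] using mul_nonpos_of_nonpos_of_nonneg (sub_nonpos.2 (hPc i hi)) (hw₀ i)
  calc ∑ i, μ i * w i
      = ∑ i ∈ P, μ i + ∑ i, (μ i - c) * (w i - if i ∈ P then 1 else 0)
          + c * (∑ i, w i - #P) := by
        simp [mul_sub, sub_mul, sum_sub_distrib, ← mul_sum]
        ring
    _ ≤ ∑ i ∈ P, μ i := by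
        rw [hw, sub_self, mul_zero, add_zero]
        exact add_le_of_nonpos_right (sum_nonpos fun i _ => key i)

theorem mul_sum_le_sum_mul_of_monotone {n : ℕ} {d t : Fin n → ℝ} (hd : Monotone d) {D : ℝ}
    (hD : ∀ i, d i ≤ D) (ht : ∀ i, ∑ j ∈ Iio i, t j ≤ 0) (htot : ∑ i, t i ≤ 0) :
    D * ∑ i, t i ≤ ∑ i, d i * t i := by
  induction n generalizing D with
  | zero => simp
  | succ n ih =>
    have hinit : ∑ i : Fin n, t i.castSucc = ∑ j ∈ Iio (Fin.last n), t j := by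
      rw [Fin.Iio_last_eq_map, sum_map]
      rfl
    have hrest := ih (hd.comp Fin.strictMono_castSucc.monotone)
      (fun i => hd (Fin.castSucc_lt_last i).le)
      (fun i => by simpa [← Fin.map_castSuccEmb_Iio] using ht i.castSucc) (hinit ▸ ht _)
    simp only [Function.comp_apply] at hrest
    rw [Fin.sum_univ_castSucc, Fin.sum_univ_castSucc (fun i => d i * t i)]
    rw [Fin.sum_univ_castSucc] at htot
    nlinarith [mul_nonpos_of_nonneg_of_nonpos (sub_nonneg.2 (hD (Fin.last n))) htot]

theorem prod_le_prod_of_sum_Iio_le {n : ℕ} {x y : Fin n → ℝ} (hx : Antitone x)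
    (hx₀ : ∀ i, 0 < x i) (hy₀ : ∀ i, 0 < y i)
    (hpre : ∀ i, ∑ j ∈ Iio i, x j ≤ ∑ j ∈ Iio i, y j) (htot : ∑ i, x i = ∑ i, y i) :
    ∏ i, y i ≤ ∏ i, x i := by
  have hweighted : ∑ i, (x i)⁻¹ * (y i - x i) ≤ 0 := by
    have habel := mul_sum_le_sum_mul_of_monotone (t := fun i => x i - y i)
      (fun i j hij => inv_anti₀ (hx₀ j) (hx hij))
      (fun i => single_le_sum (fun j _ => (inv_pos.2 (hx₀ j)).le) (mem_univ i))
      (fun i => by simpa [sum_sub_distrib] using hpre i) (by simp [sum_sub_distrib, htot])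
    rw [sum_sub_distrib, htot, sub_self, mul_zero] at habel
    simpa [mul_sub] using habel
  have htangent : ∀ i, Real.log (y i) - Real.log (x i) ≤ (x i)⁻¹ * (y i - x i) := by
    intro i
    have h := Real.log_le_sub_one_of_pos (div_pos (hy₀ i) (hx₀ i))
    rwa [Real.log_div (hy₀ i).ne' (hx₀ i).ne', div_sub_one (hx₀ i).ne', div_eq_inv_mul] at h
  rw [← Real.log_le_log_iff (prod_pos fun i _ => hy₀ i) (prod_pos fun i _ => hx₀ i),
    Real.log_prod fun i _ => (hy₀ i).ne', Real.log_prod fun i _ => (hx₀ i).ne', ← sub_nonpos,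
    ← sum_sub_distrib]
  exact (sum_le_sum fun i _ => htangent i).trans hweighted

section InnerProductSpace

variable {𝕜 E ι : Type*} [RCLike 𝕜] [NormedAddCommGroup E] [InnerProductSpace 𝕜 E] [Fintype ι]

theorem LinearMap.IsSymmetric.re_inner_map_self_eq_sum {T : E →ₗ[𝕜] E} (hT : T.IsSymmetric)
    (b : OrthonormalBasis ι 𝕜 E) {μ : ι → ℝ} (hb : ∀ i, T (b i) = (μ i : 𝕜) • b i) (v : E) :
    re ⟪v, T v⟫_𝕜 = ∑ i, μ i * ‖⟪b i, v⟫_𝕜‖ ^ 2 := by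
  rw [← b.sum_inner_mul_inner, map_sum]
  refine sum_congr rfl fun i _ => ?_
  rw [← hT, hb, inner_smul_left, conj_ofReal, ← inner_conj_symm v, mul_left_comm,
    RCLike.conj_mul, ← ofReal_pow, ← ofReal_mul, ofReal_re]

theorem LinearMap.IsSymmetric.sum_re_inner_map_self_le_sum_Iio {n : ℕ} {T : E →ₗ[𝕜] E}
    (hT : T.IsSymmetric) (b : OrthonormalBasis (Fin n) 𝕜 E) {μ : Fin n → ℝ} (hμ : Antitone μ)
    (hb : ∀ i, T (b i) = (μ i : 𝕜) • b i) {κ : Type*} {v : κ → E} (hv : Orthonormal 𝕜 v)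
    (S : Finset κ) (k : Fin n) (hS : #S = k) :
    ∑ j ∈ S, re ⟪v j, T (v j)⟫_𝕜 ≤ ∑ i ∈ Iio k, μ i := by
  -- `w i ≤ 1` is Bessel's inequality for `b i`, and `∑ w = #S` is Parseval's identity for `v j`
  set w : Fin n → ℝ := fun i => ∑ j ∈ S, ‖⟪b i, v j⟫_𝕜‖ ^ 2
  have hw₁ : ∀ i, w i ≤ 1 := fun i => by
    simpa [w, norm_inner_symm (b i)] using hv.sum_inner_products_le (b i) (s := S)
  have hw : ∑ i, w i = #(Iio k) := by
    simp [w, sum_comm (s := univ), b.sum_sq_norm_inner_right, hv.1, hS]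
  calc ∑ j ∈ S, re ⟪v j, T (v j)⟫_𝕜
      = ∑ i, μ i * w i := by
        simp_rw [hT.re_inner_map_self_eq_sum b hb, w, mul_sum]
        exact sum_comm
    _ ≤ ∑ i ∈ Iio k, μ i :=
        sum_mul_le_sum_of_separated (Iio k) (fun i hi => hμ (mem_Iio.1 hi).le)
          (fun i hi => hμ (not_lt.1 (mt mem_Iio.2 hi))) (fun i => by positivity) hw₁ hw

end InnerProductSpace

theorem exists_perm_antitone_comp {α : Type*} [LinearOrder α] {n : ℕ} (f : Fin n → α) :
    ∃ σ : Equiv.Perm (Fin n), Antitone (f ∘ σ) :=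
  ⟨Tuple.sort (OrderDual.toDual ∘ f), monotone_toDual_comp_iff.1 (Tuple.monotone_sort _)⟩

namespace Matrix.IsHermitian

section

variable {𝕜 n : Type*} [RCLike 𝕜] [Fintype n] [DecidableEq n] {A B : Matrix n n 𝕜}

theorem toEuclideanLin_eigenvectorBasis (hA : A.IsHermitian) (j : n) :
    toEuclideanLin A (hA.eigenvectorBasis j) = (hA.eigenvalues j : 𝕜) • hA.eigenvectorBasis j := by
  rw [toLpLin_apply, hA.mulVec_eigenvectorBasis, ← RCLike.real_smul_eq_coe_smul]
  rfl

theorem re_inner_toEuclideanLin_eigenvectorBasis (hA : A.IsHermitian) (j : n) :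
    re ⟪hA.eigenvectorBasis j, toEuclideanLin A (hA.eigenvectorBasis j)⟫_𝕜 = hA.eigenvalues j := by
  rw [hA.toEuclideanLin_eigenvectorBasis, inner_smul_right, inner_self_eq_norm_sq_to_K,
    hA.eigenvectorBasis.orthonormal.1 j]
  simp

theorem sum_eigenvalues_add (hA : A.IsHermitian) (hB : B.IsHermitian) :
    ∑ i, (hA.add hB).eigenvalues i = ∑ i, hA.eigenvalues i + ∑ i, hB.eigenvalues i := by
  have h := (hA.add hB).trace_eq_sum_eigenvalues
  rw [trace_add, hA.trace_eq_sum_eigenvalues, hB.trace_eq_sum_eigenvalues] at h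
  exact_mod_cast h.symm

theorem det_smul_one_add (hA : A.IsHermitian) (s : ℝ) :
    det ((s : 𝕜) • 1 + A) = ((∏ i, (s + hA.eigenvalues i) : ℝ) : 𝕜) := by
  have h := congrArg (Polynomial.eval (-(s : 𝕜))) hA.charpoly_eq
  rw [eval_charpoly, Polynomial.eval_prod] at h
  have hneg : (s : 𝕜) • 1 + A = -(scalar n (-(s : 𝕜)) - A) := by
    rw [neg_sub, scalar_apply, ← smul_one_eq_diagonal, neg_smul, sub_neg_eq_add, add_comm]
  rw [hneg, det_neg, h, Fintype.card, ← prod_const, ← prod_mul_distrib]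
  simp [add_comm]

end

theorem re_det_smul_one_add {n : Type*} [Fintype n] [DecidableEq n] {A : Matrix n n ℂ}
    (hA : A.IsHermitian) (s : ℝ) (e : Equiv.Perm n) :
    (det ((s : ℂ) • 1 + A)).re = ∏ i, (s + hA.eigenvalues (e i)) := by
  have h := hA.det_smul_one_add s
  rw [RCLike.ofReal_eq_complex_ofReal] at h
  rw [h, Complex.ofReal_re]
  exact (Equiv.prod_comp e (fun i => s + hA.eigenvalues i)).symm

section

variable {𝕜 : Type*} [RCLike 𝕜] {m : ℕ} {A B : Matrix (Fin m) (Fin m) 𝕜}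

theorem sum_re_inner_le_sum_Iio (hA : A.IsHermitian) {e : Equiv.Perm (Fin m)}
    (he : Antitone (hA.eigenvalues ∘ e)) {κ : Type*} {v : κ → EuclideanSpace 𝕜 (Fin m)}
    (hv : Orthonormal 𝕜 v) (S : Finset κ) (k : Fin m) (hS : #S = k) :
    ∑ j ∈ S, re ⟪v j, toEuclideanLin A (v j)⟫_𝕜 ≤ ∑ i ∈ Iio k, hA.eigenvalues (e i) :=
  (isSymmetric_toEuclideanLin_iff.2 hA).sum_re_inner_map_self_le_sum_Iio
    (hA.eigenvectorBasis.reindex e.symm) he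
    (fun i => by simp [hA.toEuclideanLin_eigenvectorBasis]) hv S k hS

theorem sum_Iio_eigenvalues_add_le (hA : A.IsHermitian) (hB : B.IsHermitian)
    {eA eB σ : Equiv.Perm (Fin m)} (heA : Antitone (hA.eigenvalues ∘ eA))
    (heB : Antitone (hB.eigenvalues ∘ eB)) (k : Fin m) :
    ∑ j ∈ Iio k, (hA.add hB).eigenvalues (σ j) ≤
      ∑ j ∈ Iio k, (hA.eigenvalues (eA j) + hB.eigenvalues (eB j)) := by
  set v := (hA.add hB).eigenvectorBasis ∘ σ
  have hv : Orthonormal 𝕜 v := (hA.add hB).eigenvectorBasis.orthonormal.comp σ σ.injective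
  have hsplit : ∀ j, (hA.add hB).eigenvalues (σ j) =
      re ⟪v j, toEuclideanLin A (v j)⟫_𝕜 + re ⟪v j, toEuclideanLin B (v j)⟫_𝕜 := fun j => by
    rw [← map_add, ← inner_add_right, ← LinearMap.add_apply, ← map_add]
    exact ((hA.add hB).re_inner_toEuclideanLin_eigenvectorBasis (σ j)).symm
  simp only [hsplit, sum_add_distrib]
  exact add_le_add (hA.sum_re_inner_le_sum_Iio heA hv _ k (Fin.card_Iio k))
    (hB.sum_re_inner_le_sum_Iio heB hv _ k (Fin.card_Iio k))

end

end Matrix.IsHermitian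

theorem det_ratio_ge_prod_general (K : ℕ) (s : ℝ) (hs : 0 < s)
    (A C : Matrix (Fin K) (Fin K) ℂ)
    (hA : A.PosSemidef) (hC : C.PosSemidef)
    (lamA lamC : Fin K → ℝ)
    (hlamA : Antitone lamA) (hlamC : Antitone lamC)
    (hpermA : ∃ e : Equiv.Perm (Fin K), lamA = hA.isHermitian.eigenvalues ∘ e)
    (hpermC : ∃ e : Equiv.Perm (Fin K), lamC = hC.isHermitian.eigenvalues ∘ e) :
    ∏ i, (1 + lamA i / (s + lamC i)) ≤
      (((s : ℂ) • (1 : Matrix (Fin K) (Fin K) ℂ) + A + C).det).re /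
        (((s : ℂ) • (1 : Matrix (Fin K) (Fin K) ℂ) + C).det).re := by
  obtain ⟨eA, rfl⟩ := hpermA
  obtain ⟨eC, rfl⟩ := hpermC
  have hH := hA.add hC
  obtain ⟨σ, hσ⟩ := exists_perm_antitone_comp hH.isHermitian.eigenvalues
  have hc : ∀ i, 0 < s + hC.isHermitian.eigenvalues (eC i) :=
    fun i => add_pos_of_pos_of_nonneg hs (hC.eigenvalues_nonneg _)
  have hprod : ∏ i, (s + (hA.isHermitian.eigenvalues (eA i) + hC.isHermitian.eigenvalues (eC i)))
      ≤ ∏ i, (s + hH.isHermitian.eigenvalues (σ i)) := by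
    refine prod_le_prod_of_sum_Iio_le (fun i j hij => (add_le_add_iff_left s).2 (hσ hij))
      (fun i => add_pos_of_pos_of_nonneg hs (hH.eigenvalues_nonneg _))
      (fun i => add_pos_of_pos_of_nonneg hs
        (add_nonneg (hA.eigenvalues_nonneg _) (hC.eigenvalues_nonneg _))) (fun k => ?_) ?_
    · simpa only [sum_add_distrib, add_le_add_iff_left] using
        hA.isHermitian.sum_Iio_eigenvalues_add_le hC.isHermitian hlamA hlamC k
    · simp only [sum_add_distrib, Equiv.sum_comp]
      rw [hA.isHermitian.sum_eigenvalues_add hC.isHermitian]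
  rw [add_assoc, hH.isHermitian.re_det_smul_one_add s σ, hC.isHermitian.re_det_smul_one_add s eC,
    le_div_iff₀ (prod_pos fun i _ => hc i), ← prod_mul_distrib]
  refine le_of_eq_of_le (prod_congr rfl fun i _ => ?_) hprod
  field_simp [(hc i).ne']
  simp only [Function.comp_apply]
  ring

/-- Rate lower bound: for `A`, `C` PSD Hermitian with decreasingly ordered
eigenvalues and `σ² > 0`,
`det(σ²I + A + C)/det(σ²I + C) ≥ ∏ i (1 + λ_i(A)/(σ² + λ_i(C)))`. -/
theorem det_ratio_ge_prod (K : ℕ) (hK : 1 ≤ K) (s : ℝ) (hs : 0 < s)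
    (A C : Matrix (Fin K) (Fin K) ℂ)
    (hA : A.PosSemidef) (hC : C.PosSemidef)
    (lamA lamC : Fin K → ℝ)
    (hlamA : Antitone lamA) (hlamC : Antitone lamC)
    (hpermA : ∃ e : Equiv.Perm (Fin K), lamA = hA.isHermitian.eigenvalues ∘ e)
    (hpermC : ∃ e : Equiv.Perm (Fin K), lamC = hC.isHermitian.eigenvalues ∘ e) :
    ∏ i, (1 + lamA i / (s + lamC i)) ≤
      (((s : ℂ) • (1 : Matrix (Fin K) (Fin K) ℂ) + A + C).det).re /
        (((s : ℂ) • (1 : Matrix (Fin K) (Fin K) ℂ) + C).det).re :=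
  det_ratio_ge_prod_general K s hs A C hA hC lamA lamC hlamA hlamC hpermA hpermC
end

section
/- Let N ≥ 1, let Q be an N×N complex Hermitian positive definite matrix, and let H be a K×N complex matrix such that HᴴH is positive definite (H has full column rank). Then there exists an N×N complex Hermitian positive definite matrix Q' such that: (i) Q' commutes with HᴴH (equivalently, Q' and HᴴH are simultaneously unitarily diagonalizable); (ii) the matrices H·Q'·Hᴴ and H·Q·Hᴴ have the same characteristic polynomial (hence the same eigenvalues with multiplicity); and (iii) trace(Q') ≤ trace(Q). -/
/-!
Diagonalize `HᴴH = U diag(μ) Uᴴ` and put `P = Uᴴ Q U`. Up to zero eigenvalues, `H Q Hᴴ` has the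
spectrum of `Q HᴴH`, hence of `P diag(μ)`, hence of the positive definite `M = D P D` with
`D = diag(√μ)`. If `d` are the eigenvalues of `M`, then `Q' = U diag(d (σ i) / μ i) Uᴴ` commutes
with `HᴴH` and `Q' HᴴH` has spectrum `d`, for every permutation `σ`. The trace of `Q` is
`∑ M i i / μ i`, and the diagonal of `M` is the image of `d` under the doubly stochastic matrix
`(‖V i j‖²)`, `V` the eigenvector matrix of `M`. By Birkhoff's theorem a linear functional on
doubly stochastic matrices is minimized at a permutation matrix, which yields `σ` with
`trace Q' ≤ trace Q`.
-/

open Matrix ComplexOrder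

open Polynomial Unitary

namespace Matrix

theorem charpoly_mul_eq_of_charpoly_mul_swap_eq {R m n : Type*} [CommRing R] [Fintype m]
    [DecidableEq m] [Fintype n] [DecidableEq n] (A : Matrix m n R) {B B' : Matrix n m R}
    (h : (B * A).charpoly = (B' * A).charpoly) : (A * B).charpoly = (A * B').charpoly := by
  rw [← (isRegular_X_pow (Fintype.card n)).left.eq_iff, charpoly_mul_comm' A B,
    charpoly_mul_comm' A B', h]

theorem exists_perm_dotProduct_le_of_mem_doublyStochastic {n : Type*} [Fintype n] [DecidableEq n]
    {B : Matrix n n ℝ} (hB : B ∈ doublyStochastic ℝ n) (c d : n → ℝ) :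
    ∃ σ : Equiv.Perm n, c ⬝ᵥ (d ∘ σ) ≤ c ⬝ᵥ (B *ᵥ d) := by
  let f : Matrix n n ℝ →ₗ[ℝ] ℝ :=
    { toFun B := c ⬝ᵥ (B *ᵥ d)
      map_add' _ _ := by simp only [add_mulVec, dotProduct_add]
      map_smul' _ _ := by simp only [smul_mulVec, dotProduct_smul, RingHom.id_apply] }
  rw [← SetLike.mem_coe, doublyStochastic_eq_convexHull_permMatrix] at hB
  obtain ⟨_, ⟨σ, rfl⟩, hσ⟩ := (f.concaveOn convex_univ).exists_le_of_mem_convexHull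
    (Set.subset_univ _) hB
  exact ⟨σ, by simpa [f, permMatrix_mulVec] using hσ⟩

section RCLike

variable {n 𝕜 : Type*} [Fintype n] [DecidableEq n] [RCLike 𝕜]

theorem charpoly_conjStarAlgAut (U : unitaryGroup n 𝕜) (A : Matrix n n 𝕜) :
    (conjStarAlgAut 𝕜 _ U A).charpoly = A.charpoly := by
  rw [conjStarAlgAut_apply, charpoly_mul_comm, ← mul_assoc, coe_star_mul_self, one_mul]

theorem trace_conjStarAlgAut (U : unitaryGroup n 𝕜) (A : Matrix n n 𝕜) :
    (conjStarAlgAut 𝕜 _ U A).trace = A.trace := by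
  rw [conjStarAlgAut_apply, trace_mul_comm, ← mul_assoc, coe_star_mul_self, one_mul]

theorem PosDef.conjStarAlgAut {A : Matrix n n 𝕜} (hA : A.PosDef) (U : unitaryGroup n 𝕜) :
    (conjStarAlgAut 𝕜 _ U A).PosDef := by
  rw [conjStarAlgAut_apply, star_eq_conjTranspose]
  exact hA.mul_mul_conjTranspose_same (vecMul_injective_iff_isUnit.2 (Unitary.toUnits U).isUnit)

theorem norm_sq_entries_mem_doublyStochastic (U : unitaryGroup n 𝕜) :
    of (fun i j => ‖(U : Matrix n n 𝕜) i j‖ ^ 2) ∈ doublyStochastic ℝ n := by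
  have row (i : n) : ∑ j, ((‖(U : Matrix n n 𝕜) i j‖ ^ 2 : ℝ) : 𝕜) = 1 := by
    simpa [mul_apply, RCLike.mul_conj] using congr_fun₂ (coe_mul_star_self U) i i
  have col (j : n) : ∑ i, ((‖(U : Matrix n n 𝕜) i j‖ ^ 2 : ℝ) : 𝕜) = 1 := by
    simpa [mul_apply, RCLike.conj_mul] using congr_fun₂ (coe_star_mul_self U) j j
  refine mem_doublyStochastic_iff_sum.2 ⟨fun _ _ => sq_nonneg _, fun i => ?_, fun j => ?_⟩
  · exact_mod_cast row i
  · exact_mod_cast col j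

theorem IsHermitian.re_diag_eq_mulVec_eigenvalues {A : Matrix n n 𝕜} (hA : A.IsHermitian) :
    (fun i => RCLike.re (A i i)) =
      of (fun i j => ‖(hA.eigenvectorUnitary : Matrix n n 𝕜) i j‖ ^ 2) *ᵥ hA.eigenvalues := by
  ext i
  set U : Matrix n n 𝕜 := (hA.eigenvectorUnitary : Matrix n n 𝕜)
  have hdiag : A i i = ∑ j, ((‖U i j‖ ^ 2 * hA.eigenvalues j : ℝ) : 𝕜) := by
    conv_lhs => rw [hA.spectral_theorem]
    rw [conjStarAlgAut_apply, mul_apply]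
    simp only [mul_diagonal, star_apply, Function.comp_apply]
    refine Finset.sum_congr rfl fun j _ => ?_
    rw [mul_right_comm, RCLike.star_def, RCLike.mul_conj]
    push_cast
    ring
  rw [hdiag, ← RCLike.ofReal_sum, RCLike.ofReal_re]
  rfl

theorem IsHermitian.exists_perm_dotProduct_eigenvalues_le {A : Matrix n n 𝕜} (hA : A.IsHermitian)
    (c : n → ℝ) :
    ∃ σ : Equiv.Perm n, c ⬝ᵥ (hA.eigenvalues ∘ σ) ≤ c ⬝ᵥ fun i => RCLike.re (A i i) := by
  rw [hA.re_diag_eq_mulVec_eigenvalues]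
  exact exists_perm_dotProduct_le_of_mem_doublyStochastic
    (norm_sq_entries_mem_doublyStochastic _) c _

theorem PosDef.exists_diagonal_charpoly_eq_charpoly_mul_diagonal {P : Matrix n n 𝕜}
    (hP : P.PosDef) {μ : n → ℝ} (hμ : ∀ i, 0 < μ i) :
    ∃ δ : n → ℝ, (∀ i, 0 < δ i) ∧
      (diagonal fun i => ((δ i * μ i : ℝ) : 𝕜)).charpoly =
        (P * diagonal fun i => (μ i : 𝕜)).charpoly ∧
      ∑ i, δ i ≤ RCLike.re P.trace := by
  set D : Matrix n n 𝕜 := diagonal fun i => (√(μ i) : 𝕜)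
  have hD : Dᴴ = D := by simp [D, diagonal_conjTranspose]
  have hM : (D * P * D).PosDef := by
    have hDunit : IsUnit D := isUnit_diagonal.2 <| Pi.isUnit_iff.2 fun i =>
      (RCLike.ofReal_ne_zero.2 (Real.sqrt_pos.2 (hμ i)).ne').isUnit
    simpa only [hD] using hP.conjTranspose_mul_mul_same (mulVec_injective_iff_isUnit.2 hDunit)
  have hMdiag (i : n) : RCLike.re ((D * P * D) i i) = μ i * RCLike.re (P i i) := by
    rw [mul_diagonal, diagonal_mul, mul_right_comm, ← RCLike.ofReal_mul,
      Real.mul_self_sqrt (hμ i).le, RCLike.re_ofReal_mul]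
  set d := hM.1.eigenvalues
  obtain ⟨σ, hσ⟩ := hM.1.exists_perm_dotProduct_eigenvalues_le fun i => (μ i)⁻¹
  refine ⟨fun i => d (σ i) / μ i, fun i => div_pos (hM.eigenvalues_pos _) (hμ i), ?_, ?_⟩
  · have hDD : D * D = diagonal fun i => (μ i : 𝕜) := by
      rw [diagonal_mul_diagonal]
      simp_rw [← RCLike.ofReal_mul, Real.mul_self_sqrt (hμ _).le]
    calc (diagonal fun i => ((d (σ i) / μ i * μ i : ℝ) : 𝕜)).charpoly
        = ∏ i, (X - C (d i : 𝕜)) := by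
          simp_rw [charpoly_diagonal, div_mul_cancel₀ _ (hμ _).ne']
          exact Equiv.prod_comp σ fun i => X - C (d i : 𝕜)
      _ = (D * P * D).charpoly := hM.1.charpoly_eq.symm
      _ = (P * diagonal fun i => (μ i : 𝕜)).charpoly := by
          rw [mul_assoc, charpoly_mul_comm, mul_assoc, hDD]
  · calc ∑ i, d (σ i) / μ i = (fun i => (μ i)⁻¹) ⬝ᵥ (d ∘ σ) := by
          simp [dotProduct, div_eq_inv_mul]
      _ ≤ (fun i => (μ i)⁻¹) ⬝ᵥ fun i => RCLike.re ((D * P * D) i i) := hσ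
      _ = RCLike.re P.trace := by
          simp [dotProduct, hMdiag, inv_mul_cancel_left₀ (hμ _).ne', trace, map_sum]

theorem PosDef.exists_commute_charpoly_mul_eq {G Q : Matrix n n 𝕜} (hG : G.PosDef)
    (hQ : Q.PosDef) :
    ∃ Q' : Matrix n n 𝕜, Q'.PosDef ∧ Commute Q' G ∧ (Q' * G).charpoly = (Q * G).charpoly ∧
      RCLike.re Q'.trace ≤ RCLike.re Q.trace := by
  set φ := Unitary.conjStarAlgAut 𝕜 _ hG.1.eigenvectorUnitary
  set Dμ : Matrix n n 𝕜 := diagonal fun i => (hG.1.eigenvalues i : 𝕜)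
  have hGφ : G = φ Dμ := hG.1.spectral_theorem
  have hQφ : Q = φ (φ.symm Q) := (φ.apply_symm_apply Q).symm
  have hP : (φ.symm Q).PosDef := by
    rw [conjStarAlgAut_symm]
    exact hQ.conjStarAlgAut _
  obtain ⟨δ, hδ, hchar, htrace⟩ :=
    hP.exists_diagonal_charpoly_eq_charpoly_mul_diagonal hG.eigenvalues_pos
  refine ⟨φ (diagonal fun i => (δ i : 𝕜)), ?_, ?_, ?_, ?_⟩
  · exact (posDef_diagonal_iff.2 fun i => RCLike.ofReal_pos.2 (hδ i)).conjStarAlgAut _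
  · rw [hGφ]
    exact (commute_diagonal _ _).map φ
  · rw [hGφ, ← map_mul, charpoly_conjStarAlgAut, diagonal_mul_diagonal]
    conv_rhs => rw [hQφ, ← map_mul, charpoly_conjStarAlgAut]
    simpa only [RCLike.ofReal_mul] using hchar
  · rw [trace_conjStarAlgAut, trace_diagonal, hQφ, trace_conjStarAlgAut, ← RCLike.ofReal_sum,
      RCLike.ofReal_re]
    exact htrace

end RCLike

end Matrix

theorem exists_commuting_covariance_general (N K : ℕ)
    (Q : Matrix (Fin N) (Fin N) ℂ) (hQ : Q.PosDef)
    (H : Matrix (Fin K) (Fin N) ℂ) (hH : (Hᴴ * H).PosDef) :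
    ∃ Q' : Matrix (Fin N) (Fin N) ℂ, Q'.PosDef ∧
      Commute Q' (Hᴴ * H) ∧
      (H * Q' * Hᴴ).charpoly = (H * Q * Hᴴ).charpoly ∧
      Q'.trace.re ≤ Q.trace.re := by
  obtain ⟨Q', hQ'pos, hcomm, hchar, htrace⟩ := hH.exists_commute_charpoly_mul_eq hQ
  refine ⟨Q', hQ'pos, hcomm, ?_, htrace⟩
  rw [Matrix.mul_assoc H Q', Matrix.mul_assoc H Q]
  rw [← Matrix.mul_assoc, ← Matrix.mul_assoc] at hchar
  exact charpoly_mul_eq_of_charpoly_mul_swap_eq H hchar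

/-- Structural theorem: any positive definite covariance `Q` can be replaced by a
positive definite `Q'` that commutes with `HᴴH` (hence is simultaneously
diagonalizable with it), gives `H Q' Hᴴ` the same characteristic polynomial
(hence the same eigenvalues with multiplicity) as `H Q Hᴴ`, and uses no more
transmit power: `trace(Q') ≤ trace(Q)`. -/
theorem exists_commuting_covariance (N K : ℕ) (hN : 1 ≤ N)
    (Q : Matrix (Fin N) (Fin N) ℂ) (hQ : Q.PosDef)
    (H : Matrix (Fin K) (Fin N) ℂ) (hH : (Hᴴ * H).PosDef) :
    ∃ Q' : Matrix (Fin N) (Fin N) ℂ, Q'.PosDef ∧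
      Commute Q' (Hᴴ * H) ∧
      (H * Q' * Hᴴ).charpoly = (H * Q * Hᴴ).charpoly ∧
      Q'.trace.re ≤ Q.trace.re :=
  exists_commuting_covariance_general N K Q hQ H hH
end

section
/- Let N ≥ 1 and let A and B be N×N complex Hermitian positive definite matrices with eigenvalues α₁ ≥ … ≥ α_N and β₁ ≥ … ≥ β_N (decreasing order). Let B^{1/2} be the positive definite square root of B and let μ₁ ≥ … ≥ μ_N be the eigenvalues of B^{1/2}·A·B^{1/2} in decreasing order (these equal the eigenvalues of A·B). Then the real vector d = (log μ₁ − log β₁, …, log μ_N − log β_N) is majorized by the vector (log α₁, …, log α_N): for every k with 1 ≤ k ≤ N, the sum of the k largest entries of d is at most Σ_{i=1}^k log α_i, and Σ_{i=1}^N d_i = Σ_{i=1}^N log α_i. -/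
open Matrix BigOperators ComplexOrder
open scoped MatrixOrder

variable {N : ℕ}


lemma repr_toEuclideanLin (X : Matrix (Fin N) (Fin N) ℂ) (hX : X.IsHermitian)
    (v : EuclideanSpace ℂ (Fin N)) (j : Fin N) :
    hX.eigenvectorBasis.repr (Matrix.toEuclideanLin X v) j
      = (hX.eigenvalues j : ℂ) * hX.eigenvectorBasis.repr v j := by
  have hsym := (Matrix.isHermitian_iff_isSymmetric.1 hX)
  rw [OrthonormalBasis.repr_apply_apply, ← hsym]
  have h1 : Matrix.toEuclideanLin X (hX.eigenvectorBasis j)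
      = (hX.eigenvalues j : ℂ) • hX.eigenvectorBasis j := by
    apply (WithLp.equiv 2 _).injective
    rw [Matrix.toEuclideanLin_apply]
    simp only [WithLp.equiv_apply, WithLp.ofLp_toLp, WithLp.ofLp_smul]
    rw [hX.mulVec_eigenvectorBasis]
    simp [Complex.real_smul]
  rw [h1, inner_smul_left, Complex.conj_ofReal, OrthonormalBasis.repr_apply_apply]

lemma conj_term (c : ℂ) (e : ℝ) : RCLike.re ((starRingEnd ℂ) c * ((e : ℂ) * c)) = e * ‖c‖ ^ 2 := by
  have : (starRingEnd ℂ) c * ((e : ℂ) * c) = (e : ℂ) * (c * (starRingEnd ℂ) c) := by ring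
  rw [this, Complex.mul_conj, Complex.normSq_eq_norm_sq,
    ← Complex.ofReal_mul]
  exact Complex.ofReal_re _

lemma re_inner_expand (X : Matrix (Fin N) (Fin N) ℂ) (hX : X.IsHermitian)
    (v : EuclideanSpace ℂ (Fin N)) :
    RCLike.re (inner ℂ v (Matrix.toEuclideanLin X v) : ℂ)
      = ∑ j, hX.eigenvalues j * ‖hX.eigenvectorBasis.repr v j‖ ^ 2 := by
  have h := (hX.eigenvectorBasis.repr.inner_map_map v (Matrix.toEuclideanLin X v)).symm
  rw [h, PiLp.inner_apply, map_sum]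
  congr 1; funext j
  rw [repr_toEuclideanLin X hX v j]
  simp only [RCLike.inner_apply]
  rw [mul_comm]
  exact conj_term _ _

lemma norm_sq_expand (v : EuclideanSpace ℂ (Fin N))
    (b : OrthonormalBasis (Fin N) ℂ (EuclideanSpace ℂ (Fin N))) :
    ‖v‖ ^ 2 = ∑ j, ‖b.repr v j‖ ^ 2 := by
  rw [← inner_self_eq_norm_sq (𝕜 := ℂ), ← b.repr.inner_map_map v v, PiLp.inner_apply, map_sum]
  congr 1; funext j
  simp only [RCLike.inner_apply]
  have := conj_term (b.repr v j) 1
  simpa using this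


lemma repr_eq_zero_of_mem_span (b : OrthonormalBasis (Fin N) ℂ (EuclideanSpace ℂ (Fin N)))
    (t : Finset (Fin N)) (v : EuclideanSpace ℂ (Fin N))
    (hv : v ∈ Submodule.span ℂ (⇑b '' ↑t)) (j : Fin N) (hj : j ∉ t) :
    b.repr v j = 0 := by
  rw [OrthonormalBasis.repr_apply_apply]
  have : Submodule.span ℂ (⇑b '' ↑t) ≤ LinearMap.ker (innerSL ℂ (b j)).toLinearMap := by
    rw [Submodule.span_le]
    rintro u ⟨i, hi, rfl⟩
    simp only [SetLike.mem_coe, LinearMap.mem_ker, ContinuousLinearMap.coe_coe, innerSL_apply_apply]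
    exact b.orthonormal.2 (fun h => hj (h ▸ hi))
  simpa using this hv

lemma finrank_span_basis_image (b : OrthonormalBasis (Fin N) ℂ (EuclideanSpace ℂ (Fin N)))
    (t : Finset (Fin N)) :
    Module.finrank ℂ (Submodule.span ℂ (⇑b '' ↑t)) = t.card := by
  have h1 : ⇑b '' ↑t = Set.range (⇑b ∘ (Subtype.val : ↥t → Fin N)) := by
    rw [Set.range_comp, Subtype.range_coe]
  rw [h1, finrank_span_eq_card ((b.orthonormal.linearIndependent).comp _ Subtype.val_injective)]
  simp

lemma rayleigh_ge (X : Matrix (Fin N) (Fin N) ℂ) (hX : X.IsHermitian)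
    (t : Finset (Fin N)) (c : ℝ) (hc : ∀ j ∈ t, c ≤ hX.eigenvalues j)
    (v : EuclideanSpace ℂ (Fin N))
    (hv : v ∈ Submodule.span ℂ (⇑hX.eigenvectorBasis '' ↑t)) :
    c * ‖v‖ ^ 2 ≤ RCLike.re (inner ℂ v (Matrix.toEuclideanLin X v) : ℂ) := by
  rw [re_inner_expand X hX v, norm_sq_expand v hX.eigenvectorBasis, Finset.mul_sum]
  apply Finset.sum_le_sum
  intro j _
  by_cases hj : j ∈ t
  · have := hc j hj
    nlinarith [sq_nonneg ‖hX.eigenvectorBasis.repr v j‖]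
  · rw [repr_eq_zero_of_mem_span hX.eigenvectorBasis t v hv j hj]
    simp

lemma rayleigh_le (X : Matrix (Fin N) (Fin N) ℂ) (hX : X.IsHermitian)
    (t : Finset (Fin N)) (c : ℝ) (hc : ∀ j ∈ t, hX.eigenvalues j ≤ c)
    (v : EuclideanSpace ℂ (Fin N))
    (hv : v ∈ Submodule.span ℂ (⇑hX.eigenvectorBasis '' ↑t)) :
    RCLike.re (inner ℂ v (Matrix.toEuclideanLin X v) : ℂ) ≤ c * ‖v‖ ^ 2 := by
  rw [re_inner_expand X hX v, norm_sq_expand v hX.eigenvectorBasis, Finset.mul_sum]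
  apply Finset.sum_le_sum
  intro j _
  by_cases hj : j ∈ t
  · have := hc j hj
    nlinarith [sq_nonneg ‖hX.eigenvectorBasis.repr v j‖]
  · rw [repr_eq_zero_of_mem_span hX.eigenvectorBasis t v hv j hj]
    simp

lemma psd_re_inner_nonneg (P : Matrix (Fin N) (Fin N) ℂ) (hP : P.PosSemidef)
    (v : EuclideanSpace ℂ (Fin N)) :
    0 ≤ RCLike.re (inner ℂ v (Matrix.toEuclideanLin P v) : ℂ) := by
  rw [Matrix.toEuclideanLin_apply]
  have : (inner ℂ v (WithLp.toLp 2 (P *ᵥ WithLp.ofLp v)) : ℂ)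
      = star (WithLp.ofLp v) ⬝ᵥ (P *ᵥ WithLp.ofLp v) := by
    rw [EuclideanSpace.inner_eq_star_dotProduct]
    simp [dotProduct_comm]
  rw [this]
  exact hP.re_dotProduct_nonneg _

lemma exists_nonzero_inf (V W : Submodule ℂ (EuclideanSpace ℂ (Fin N)))
    (h : N < Module.finrank ℂ V + Module.finrank ℂ W) :
    ∃ v : EuclideanSpace ℂ (Fin N), v ∈ V ⊓ W ∧ v ≠ 0 := by
  have hE : Module.finrank ℂ (EuclideanSpace ℂ (Fin N)) = N := by
    simp [finrank_euclideanSpace]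
  have hsup : Module.finrank ℂ (V ⊔ W : Submodule ℂ _) ≤ N := by
    calc Module.finrank ℂ (V ⊔ W : Submodule ℂ _) ≤ Module.finrank ℂ (EuclideanSpace ℂ (Fin N)) :=
          Submodule.finrank_le _
      _ = N := hE
  have hinf : 0 < Module.finrank ℂ (V ⊓ W : Submodule ℂ _) := by
    have := Submodule.finrank_sup_add_finrank_inf_eq V W
    omega
  have : (V ⊓ W : Submodule ℂ _) ≠ ⊥ := by
    intro hbot
    rw [hbot, finrank_bot] at hinf
    omega
  obtain ⟨v, hv, hv0⟩ := Submodule.exists_mem_ne_zero_of_ne_bot this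
  exact ⟨v, hv, hv0⟩

lemma weyl_smul (X Y : Matrix (Fin N) (Fin N) ℂ) (hX : X.IsHermitian) (hY : Y.IsHermitian)
    (c : ℝ) (hc : 0 ≤ c) (hP : (Y - (c : ℂ) • X).PosSemidef)
    (x y : Fin N → ℝ) (hx : Antitone x) (hy : Antitone y)
    (ex : Equiv.Perm (Fin N)) (hex : x = hX.eigenvalues ∘ ex)
    (ey : Equiv.Perm (Fin N)) (hey : y = hY.eigenvalues ∘ ey)
    (i : Fin N) : c * x i ≤ y i := by
  classical
  set tX : Finset (Fin N) := Finset.image ex (Finset.Iic i) with htX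
  set tY : Finset (Fin N) := Finset.image ey (Finset.Ici i) with htY
  set V := Submodule.span ℂ (⇑hX.eigenvectorBasis '' ↑tX) with hV
  set W := Submodule.span ℂ (⇑hY.eigenvectorBasis '' ↑tY) with hW
  have hdimV : Module.finrank ℂ V = (i : ℕ) + 1 := by
    rw [hV, finrank_span_basis_image, htX, Finset.card_image_of_injective _ ex.injective,
      Fin.card_Iic]
  have hdimW : Module.finrank ℂ W = N - (i : ℕ) := by
    rw [hW, finrank_span_basis_image, htY, Finset.card_image_of_injective _ ey.injective,
      Fin.card_Ici]
  obtain ⟨v, hvm, hv0⟩ := exists_nonzero_inf V W (by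
    have := i.isLt
    omega)
  have hnorm : 0 < ‖v‖ ^ 2 := by
    have : 0 < ‖v‖ := norm_pos_iff.mpr hv0
    positivity
  have hXbound : x i * ‖v‖ ^ 2 ≤ RCLike.re (inner ℂ v (Matrix.toEuclideanLin X v) : ℂ) := by
    apply rayleigh_ge X hX tX (x i) _ v hvm.1
    intro j hj
    obtain ⟨j', hj', rfl⟩ := Finset.mem_image.mp hj
    have : x j' = hX.eigenvalues (ex j') := by rw [hex]; rfl
    rw [← this]
    exact hx (Finset.mem_Iic.mp hj')
  have hYbound : RCLike.re (inner ℂ v (Matrix.toEuclideanLin Y v) : ℂ) ≤ y i * ‖v‖ ^ 2 := by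
    apply rayleigh_le Y hY tY (y i) _ v hvm.2
    intro j hj
    obtain ⟨j', hj', rfl⟩ := Finset.mem_image.mp hj
    have : y j' = hY.eigenvalues (ey j') := by rw [hey]; rfl
    rw [← this]
    exact hy (Finset.mem_Ici.mp hj')
  have hmid : c * RCLike.re (inner ℂ v (Matrix.toEuclideanLin X v) : ℂ)
      ≤ RCLike.re (inner ℂ v (Matrix.toEuclideanLin Y v) : ℂ) := by
    have h0 := psd_re_inner_nonneg _ hP v
    have hlin : Matrix.toEuclideanLin (Y - (c : ℂ) • X) v
        = Matrix.toEuclideanLin Y v - (c : ℂ) • Matrix.toEuclideanLin X v := by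
      rw [map_sub, _root_.map_smul]
      rfl
    rw [hlin] at h0
    rw [inner_sub_right, inner_smul_right, map_sub] at h0
    have : RCLike.re ((c : ℂ) * (inner ℂ v (Matrix.toEuclideanLin X v) : ℂ))
        = c * RCLike.re (inner ℂ v (Matrix.toEuclideanLin X v) : ℂ) := by
      simp [Complex.ofReal_mul]
    rw [this] at h0
    linarith
  have hchain : c * (x i * ‖v‖ ^ 2) ≤ y i * ‖v‖ ^ 2 := by
    calc c * (x i * ‖v‖ ^ 2) ≤ c * RCLike.re (inner ℂ v (Matrix.toEuclideanLin X v) : ℂ) :=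
          mul_le_mul_of_nonneg_left hXbound hc
      _ ≤ RCLike.re (inner ℂ v (Matrix.toEuclideanLin Y v) : ℂ) := hmid
      _ ≤ y i * ‖v‖ ^ 2 := hYbound
  nlinarith

lemma sandwich_posDef (A B : Matrix (Fin N) (Fin N) ℂ) (hA : A.PosDef) (hB : B.PosDef) :
    (CFC.sqrt B * A * CFC.sqrt B).PosDef := by
  set Bs := CFC.sqrt B with hBs
  have hBsH : Bs.IsHermitian := (CFC.sqrt_nonneg B).posSemidef.isHermitian
  refine Matrix.PosDef.of_dotProduct_mulVec_pos ?_ ?_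
  · have := Matrix.isHermitian_conjTranspose_mul_mul Bs hA.isHermitian
    rwa [hBsH.eq] at this
  · intro x hx
    have hBsx : Bs *ᵥ x ≠ 0 := by
      intro h0
      have hBx : B *ᵥ x = 0 := by
        rw [← CFC.sqrt_mul_sqrt_self B hB.posSemidef.nonneg, ← Matrix.mulVec_mulVec, h0, Matrix.mulVec_zero]
      have := hB.dotProduct_mulVec_pos hx
      rw [hBx] at this
      simp at this
    have key : dotProduct (star x) ((Bs * A * Bs) *ᵥ x)
        = dotProduct (star (Bs *ᵥ x)) (A *ᵥ (Bs *ᵥ x)) := by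
      rw [← Matrix.mulVec_mulVec, ← Matrix.mulVec_mulVec, Matrix.dotProduct_mulVec (star x),
        Matrix.star_mulVec]
      rw [hBsH.eq]
    rw [key]
    exact hA.dotProduct_mulVec_pos hBsx

lemma exists_antitone_sort (f : Fin N → ℝ) :
    ∃ e : Equiv.Perm (Fin N), Antitone (f ∘ e) := by
  obtain e := Tuple.sort (fun j => -f j)
  refine ⟨Tuple.sort (fun j => -f j), ?_⟩
  intro a b hab
  have := Tuple.monotone_sort (fun j => -f j) hab
  simpa using this

lemma plus_matrix (A : Matrix (Fin N) (Fin N) ℂ) (hA : A.IsHermitian) (c : ℝ) :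
    ∃ Ap : Matrix (Fin N) (Fin N) ℂ, Ap.IsHermitian ∧ (Ap - A).PosSemidef ∧
      (Ap - (c : ℂ) • 1).PosSemidef ∧
      Ap.det = ∏ j, ((max (hA.eigenvalues j) c : ℝ) : ℂ) := by
  classical
  set u : Matrix (Fin N) (Fin N) ℂ := (hA.eigenvectorUnitary : Matrix (Fin N) (Fin N) ℂ) with hu
  have h1 : u * star u = 1 := Matrix.mem_unitaryGroup_iff.mp hA.eigenvectorUnitary.2
  have hAeq0 : A = u * Matrix.diagonal (RCLike.ofReal ∘ hA.eigenvalues) * star u :=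
    hA.spectral_theorem
  set ev : Fin N → ℝ := hA.eigenvalues with hev
  set g : Fin N → ℝ := fun j => max (ev j) c with hg
  set D : Matrix (Fin N) (Fin N) ℂ := Matrix.diagonal (fun j => ((g j : ℝ) : ℂ)) with hD
  refine ⟨u * D * star u, ?_, ?_, ?_, ?_⟩
  · have hD' : D.IsHermitian := by
      rw [hD]
      apply Matrix.isHermitian_diagonal_of_self_adjoint
      funext j
      simp [RCLike.star_def, Complex.conj_ofReal]
    have := Matrix.isHermitian_mul_mul_conjTranspose u hD'
    rwa [← Matrix.star_eq_conjTranspose] at this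
  · have key : u * D * star u - A
        = u * (Matrix.diagonal (fun j => ((g j - ev j : ℝ) : ℂ))) * star u := by
      rw [hAeq0, ← Matrix.sub_mul, ← Matrix.mul_sub]
      congr 2
      rw [Matrix.diagonal_sub]
      congr 1
      funext j
      push_cast
      rfl
    rw [key]
    have hpsd : (Matrix.diagonal
        (fun j => ((g j - ev j : ℝ) : ℂ))).PosSemidef := by
      rw [Matrix.posSemidef_diagonal_iff]
      intro j
      rw [Complex.zero_le_real]
      simp [hg, le_max_left]
    have := hpsd.mul_mul_conjTranspose_same u
    rwa [← Matrix.star_eq_conjTranspose] at this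
  · have hc1 : (c : ℂ) • (1 : Matrix (Fin N) (Fin N) ℂ) = u * ((c : ℂ) • 1) * star u := by
      rw [Matrix.mul_smul, Matrix.smul_mul, mul_one, h1]
    have key : u * D * star u - (c : ℂ) • 1
        = u * (Matrix.diagonal (fun j => ((g j - c : ℝ) : ℂ))) * star u := by
      rw [hc1, ← Matrix.sub_mul, ← Matrix.mul_sub]
      congr 2
      rw [Matrix.smul_one_eq_diagonal, Matrix.diagonal_sub]
      congr 1
      funext j
      push_cast
      rfl
    rw [key]
    have hpsd : (Matrix.diagonal
        (fun j => ((g j - c : ℝ) : ℂ))).PosSemidef := by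
      rw [Matrix.posSemidef_diagonal_iff]
      intro j
      rw [Complex.zero_le_real]
      simp [hg, le_max_right]
    have := hpsd.mul_mul_conjTranspose_same u
    rwa [← Matrix.star_eq_conjTranspose] at this
  · rw [Matrix.det_mul, Matrix.det_mul]
    have h2 : u.det * (star u).det = 1 := by
      rw [← Matrix.det_mul, h1, Matrix.det_one]
    have : u.det * D.det * (star u).det = D.det * (u.det * (star u).det) := by ring
    rw [this, h2, mul_one, hD, Matrix.det_diagonal]

lemma det_via_sorted (X : Matrix (Fin N) (Fin N) ℂ) (hX : X.IsHermitian)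
    (x : Fin N → ℝ) (e : Equiv.Perm (Fin N)) (hxe : x = hX.eigenvalues ∘ e) :
    X.det = ((∏ i, x i : ℝ) : ℂ) := by
  rw [hX.det_eq_prod_eigenvalues, Complex.ofReal_prod, hxe]
  exact (Equiv.prod_comp e (fun j => ((hX.eigenvalues j : ℝ) : ℂ))).symm

lemma card_filter_lt (k : ℕ) (hk : k ≤ N) :
    (Finset.univ.filter (fun i : Fin N => (i : ℕ) < k)).card = k := by
  apply Finset.card_eq_of_bijective (fun i h => (⟨i, lt_of_lt_of_le h hk⟩ : Fin N))
  · intro a ha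
    rw [Finset.mem_filter] at ha
    exact ⟨a, ha.2, rfl⟩
  · intro i h
    simpa using h
  · intro i j hi hj hij
    simpa using congrArg Fin.val hij
set_option maxHeartbeats 1000000 in
/-- Majorization lemma (Marshall–Olkin H.1.e): with `A`, `B` Hermitian positive
definite, eigenvalues `α`, `β` in decreasing order, and `μ` the decreasingly
ordered eigenvalues of `B^{1/2} A B^{1/2}`, the vector
`d = (log μ_i − log β_i)` is majorized by `(log α_i)`: every sum of `k` entries
of `d` is at most `∑_{i<k} log α_i`, and the total sums agree. -/
theorem log_eigenvalues_majorization (N : ℕ) (hN : 1 ≤ N)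
    (A B : Matrix (Fin N) (Fin N) ℂ)
    (hA : A.PosDef) (hB : B.PosDef)
    (α β : Fin N → ℝ) (hα : Antitone α) (hβ : Antitone β)
    (hαperm : ∃ e : Equiv.Perm (Fin N), α = hA.isHermitian.eigenvalues ∘ e)
    (hβperm : ∃ e : Equiv.Perm (Fin N), β = hB.isHermitian.eigenvalues ∘ e)
    (hM : (CFC.sqrt B * A * CFC.sqrt B).IsHermitian)
    (μ : Fin N → ℝ) (hμ : Antitone μ)
    (hμperm : ∃ e : Equiv.Perm (Fin N), μ = hM.eigenvalues ∘ e) :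
    (∀ k : ℕ, k ≤ N → ∀ s : Finset (Fin N), s.card = k →
      ∑ i ∈ s, (Real.log (μ i) - Real.log (β i)) ≤
        ∑ i ∈ Finset.univ.filter (fun i : Fin N => (i : ℕ) < k), Real.log (α i)) ∧
    ∑ i, (Real.log (μ i) - Real.log (β i)) = ∑ i, Real.log (α i) := by
  classical
  obtain ⟨eA, hαe⟩ := hαperm
  obtain ⟨eB, hβe⟩ := hβperm
  obtain ⟨eM, hμe⟩ := hμperm
  set Bs := CFC.sqrt B with hBsdef
  have hBsH : Bs.IsHermitian := (CFC.sqrt_nonneg B).posSemidef.isHermitian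
  have hBs2 : Bs * Bs = B := CFC.sqrt_mul_sqrt_self B hB.posSemidef.nonneg
  have hMpd : (Bs * A * Bs).PosDef := sandwich_posDef A B hA hB
  have hαpos : ∀ i, 0 < α i := fun i => by
    rw [hαe]; exact hA.eigenvalues_pos _
  have hβpos : ∀ i, 0 < β i := fun i => by
    rw [hβe]; exact hB.eigenvalues_pos _
  have hμpos : ∀ i, 0 < μ i := fun i => by
    rw [hμe]; exact hMpd.eigenvalues_pos _
  have hdetM : (Bs * A * Bs).det = A.det * B.det := by
    rw [Matrix.det_mul, Matrix.det_mul]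
    have h2 : Bs.det * A.det * Bs.det = A.det * (Bs.det * Bs.det) := by ring
    rw [h2, ← Matrix.det_mul, hBs2]
  have hprodμ : ∏ i, μ i = (∏ i, α i) * ∏ i, β i := by
    have h1 := det_via_sorted _ hM μ eM hμe
    have h2 := det_via_sorted _ hA.isHermitian α eA hαe
    have h3 := det_via_sorted _ hB.isHermitian β eB hβe
    rw [h1, h2, h3] at hdetM
    exact_mod_cast hdetM
  constructor
  · intro k hk s hs
    rcases Nat.eq_zero_or_pos k with hk0 | hkpos
    · subst hk0
      rw [Finset.card_eq_zero] at hs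
      subst hs
      simp
    · set ik : Fin N := ⟨k - 1, by omega⟩ with hik
      set c : ℝ := α ik with hcdef
      have hcpos : 0 < c := hαpos ik
      obtain ⟨Ap, hApH, hApA, hApc, hApdet⟩ := plus_matrix A hA.isHermitian c
      set Mp := Bs * Ap * Bs with hMpdef
      have hMpH : Mp.IsHermitian := by
        have := Matrix.isHermitian_mul_mul_conjTranspose Bs hApH
        rwa [hBsH.eq] at this
      obtain ⟨eP, hePanti⟩ := exists_antitone_sort hMpH.eigenvalues
      set m : Fin N → ℝ := hMpH.eigenvalues ∘ eP with hm
      have hW1 : ∀ i, μ i ≤ m i := by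
        intro i
        have hP : (Mp - ((1 : ℝ) : ℂ) • (Bs * A * Bs)).PosSemidef := by
          have h0 := hApA.mul_mul_conjTranspose_same Bs
          rw [hBsH.eq] at h0
          have heq : Bs * (Ap - A) * Bs = Mp - ((1 : ℝ) : ℂ) • (Bs * A * Bs) := by
            rw [Matrix.mul_sub, Matrix.sub_mul, hMpdef]
            norm_num
          rwa [heq] at h0
        have := weyl_smul (Bs * A * Bs) Mp hM hMpH 1 zero_le_one hP μ m hμ hePanti
          eM hμe eP hm i
        simpa using this
      have hW2 : ∀ i, c * β i ≤ m i := by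
        intro i
        have hP : (Mp - (c : ℂ) • B).PosSemidef := by
          have h0 := hApc.mul_mul_conjTranspose_same Bs
          rw [hBsH.eq] at h0
          have hsm : Bs * ((c : ℂ) • (1 : Matrix (Fin N) (Fin N) ℂ)) * Bs = (c : ℂ) • B := by
            rw [mul_smul_comm, smul_mul_assoc, mul_one, hBs2]
          have heq : Bs * (Ap - (c : ℂ) • 1) * Bs = Mp - (c : ℂ) • B := by
            rw [Matrix.mul_sub, Matrix.sub_mul, hsm, hMpdef]
          rwa [heq] at h0
        exact weyl_smul B Mp hB.isHermitian hMpH c hcpos.le hP β m hβ hePanti eB hβe eP hm i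
      have hmpos : ∀ i, 0 < m i := fun i => lt_of_lt_of_le (mul_pos hcpos (hβpos i)) (hW2 i)
      have hdetMp : Mp.det = B.det * Ap.det := by
        rw [hMpdef, Matrix.det_mul, Matrix.det_mul]
        have h2 : Bs.det * Ap.det * Bs.det = Bs.det * Bs.det * Ap.det := by ring
        rw [h2, ← Matrix.det_mul, hBs2]
      have hprodm : ∏ i, m i = (∏ i, β i) * ∏ i, max (α i) c := by
        have h1 := det_via_sorted Mp hMpH m eP hm
        have h3 := det_via_sorted B hB.isHermitian β eB hβe
        rw [h1, h3, hApdet] at hdetMp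
        have h4 : (∏ j, ((max (hA.isHermitian.eigenvalues j) c : ℝ) : ℂ))
            = ∏ i, ((max (α i) c : ℝ) : ℂ) := by
          rw [← Equiv.prod_comp eA
            (fun j => ((max (hA.isHermitian.eigenvalues j) c : ℝ) : ℂ))]
          apply Finset.prod_congr rfl
          intro i _
          rw [hαe]
          rfl
        rw [h4] at hdetMp
        exact_mod_cast hdetMp
      have hlogm : ∑ i, Real.log (m i)
          = ∑ i, Real.log (β i) + ∑ i, Real.log (max (α i) c) := by
        rw [← Real.log_prod (fun i _ => (hmpos i).ne'), hprodm,
          Real.log_mul (Finset.prod_pos (fun i _ => hβpos i)).ne'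
            (Finset.prod_pos (fun i _ => lt_max_of_lt_right hcpos)).ne',
          Real.log_prod (fun i _ => (hβpos i).ne'),
          Real.log_prod (fun i _ => (lt_max_of_lt_right hcpos).ne')]
      have hsplit : ∑ i, Real.log (max (α i) c)
          = (∑ i ∈ Finset.univ.filter (fun i : Fin N => (i : ℕ) < k), Real.log (α i))
            + ((N - k : ℕ) : ℝ) * Real.log c := by
        rw [← Finset.sum_filter_add_sum_filter_not Finset.univ (fun i : Fin N => (i : ℕ) < k)
          (fun i => Real.log (max (α i) c))]
        congr 1
        · apply Finset.sum_congr rfl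
          intro i hi
          have hik' : i ≤ ik := by
            have : (i : ℕ) < k := (Finset.mem_filter.mp hi).2
            exact Fin.le_def.mpr (by simp [hik]; omega)
          rw [max_eq_left (hα hik')]
        · have hcard : (Finset.univ.filter (fun i : Fin N => ¬ (i : ℕ) < k)).card = N - k := by
            have h1 := card_filter_lt (N := N) k hk
            have h2 := Finset.card_filter_add_card_filter_not
              (s := (Finset.univ : Finset (Fin N))) (p := fun i : Fin N => (i : ℕ) < k)
            rw [Finset.card_univ, Fintype.card_fin] at h2
            omega
          have hconst : ∀ i ∈ Finset.univ.filter (fun i : Fin N => ¬ (i : ℕ) < k),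
              Real.log (max (α i) c) = Real.log c := by
            intro i hi
            have hik' : ik ≤ i := by
              have : ¬ (i : ℕ) < k := (Finset.mem_filter.mp hi).2
              exact Fin.le_def.mpr (by simp [hik]; omega)
            rw [max_eq_right (hα hik')]
          rw [Finset.sum_congr rfl hconst, Finset.sum_const, hcard, nsmul_eq_mul]
      have hstep1 : ∑ i ∈ s, (Real.log (μ i) - Real.log (β i))
          ≤ ∑ i ∈ s, (Real.log (m i) - Real.log (β i)) := by
        apply Finset.sum_le_sum
        intro i _
        have := Real.log_le_log (hμpos i) (hW1 i)
        linarith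
      have hstep2 : ∀ i, Real.log c + Real.log (β i) ≤ Real.log (m i) := by
        intro i
        have h1 : Real.log (c * β i) ≤ Real.log (m i) :=
          Real.log_le_log (mul_pos hcpos (hβpos i)) (hW2 i)
        rwa [Real.log_mul hcpos.ne' (hβpos i).ne'] at h1
      have hstep3 : ∑ i ∈ s, (Real.log (m i) - Real.log (β i))
          ≤ ∑ i, (Real.log (m i) - Real.log (β i)) - ((N - k : ℕ) : ℝ) * Real.log c := by
        have hsplit2 := Finset.sum_add_sum_compl s (fun i => Real.log (m i) - Real.log (β i))
        have hcard : sᶜ.card = N - k := by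
          rw [Finset.card_compl, hs, Fintype.card_fin]
        have hbound : ((N - k : ℕ) : ℝ) * Real.log c
            ≤ ∑ i ∈ sᶜ, (Real.log (m i) - Real.log (β i)) := by
          calc ((N - k : ℕ) : ℝ) * Real.log c = ∑ _i ∈ sᶜ, Real.log c := by
                rw [Finset.sum_const, hcard, nsmul_eq_mul]
            _ ≤ ∑ i ∈ sᶜ, (Real.log (m i) - Real.log (β i)) :=
                Finset.sum_le_sum (fun i _ => by have := hstep2 i; linarith)
        linarith
      have hfinal : ∑ i, (Real.log (m i) - Real.log (β i))
          = (∑ i ∈ Finset.univ.filter (fun i : Fin N => (i : ℕ) < k), Real.log (α i))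
            + ((N - k : ℕ) : ℝ) * Real.log c := by
        rw [Finset.sum_sub_distrib, hlogm, hsplit]
        ring
      linarith
  · rw [Finset.sum_sub_distrib,
      ← Real.log_prod (fun i _ => (hμpos i).ne'),
      ← Real.log_prod (fun i _ => (hβpos i).ne'),
      ← Real.log_prod (fun i _ => (hαpos i).ne'),
      hprodμ, Real.log_mul (Finset.prod_pos (fun i _ => hαpos i)).ne'
        (Finset.prod_pos (fun i _ => hβpos i)).ne']
    ring
end

section
/- Let n ≥ 1 and let a, b : {1,…,n} → ℝ be vectors with strictly positive entries arranged in nonincreasing order (a₁ ≥ a₂ ≥ … ≥ a_n > 0 and b₁ ≥ b₂ ≥ … ≥ b_n > 0). Suppose a is multiplicatively majorized by b, i.e. ∏_{i=1}^k a_i ≤ ∏_{i=1}^k b_i for every k with 1 ≤ k ≤ n, and ∏_{i=1}^n a_i = ∏_{i=1}^n b_i. Then a is weakly majorized by b: Σ_{i=1}^k a_i ≤ Σ_{i=1}^k b_i for every k with 1 ≤ k ≤ n; in particular Σ_{i=1}^n a_i ≤ Σ_{i=1}^n b_i. -/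
/-!
Put `dᵢ = log (aᵢ / bᵢ)`. The product inequalities say that every partial sum of `d` is
nonpositive, and the tangent-line bound `log t ≤ t - 1` at `t = bᵢ / aᵢ` gives
`aᵢ - bᵢ ≤ aᵢ dᵢ`. Summation by parts against the nonincreasing, positive weights `aᵢ`
shows `∑_{i<k} aᵢ dᵢ ≤ 0`, hence `∑_{i<k} (aᵢ - bᵢ) ≤ 0`.
-/

open Finset

theorem Finset.sum_range_mul_nonpos_of_antitone {R : Type*} [CommRing R] [LinearOrder R]
    [IsStrictOrderedRing R] {w d : ℕ → R} {k : ℕ} (hw_nonneg : ∀ i < k, 0 ≤ w i)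
    (hw_anti : ∀ i, i + 1 < k → w (i + 1) ≤ w i)
    (hd : ∀ j, 1 ≤ j → j ≤ k → ∑ i ∈ range j, d i ≤ 0) :
    ∑ i ∈ range k, w i * d i ≤ 0 := by
  rcases Nat.eq_zero_or_pos k with rfl | hk
  · simp
  have hlast : w (k - 1) * ∑ i ∈ range k, d i ≤ 0 :=
    mul_nonpos_of_nonneg_of_nonpos (hw_nonneg _ (by omega)) (hd k hk le_rfl)
  have hsteps : 0 ≤ ∑ i ∈ range (k - 1), (w (i + 1) - w i) * ∑ j ∈ range (i + 1), d j :=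
    sum_nonneg fun i hi => by
      have hi : i + 1 < k := by rw [mem_range] at hi; omega
      exact mul_nonneg_of_nonpos_of_nonpos (sub_nonpos.2 (hw_anti i hi)) (hd _ (by omega) hi.le)
  have := sum_range_by_parts w d k
  simp only [smul_eq_mul] at this
  linarith

theorem Real.sub_le_mul_log_div {x y : ℝ} (hx : 0 < x) (hy : 0 < y) :
    x - y ≤ x * Real.log (x / y) := by
  have h := Real.one_sub_inv_le_log_of_pos (div_pos hx hy)
  rw [inv_div] at h
  calc x - y = x * (1 - y / x) := by field_simp
    _ ≤ x * Real.log (x / y) := mul_le_mul_of_nonneg_left h hx.le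

theorem Real.sum_log_div_nonpos_of_prod_le {ι : Type*} {s : Finset ι} {a b : ι → ℝ}
    (ha : ∀ i ∈ s, 0 < a i) (hb : ∀ i ∈ s, 0 < b i) (hab : ∏ i ∈ s, a i ≤ ∏ i ∈ s, b i) :
    ∑ i ∈ s, Real.log (a i / b i) ≤ 0 := by
  rw [← Real.log_prod fun i hi => (div_pos (ha i hi) (hb i hi)).ne', prod_div_distrib]
  exact Real.log_nonpos (div_nonneg (prod_pos ha).le (prod_pos hb).le)
    (div_le_one_of_le₀ hab (prod_pos hb).le)

theorem mul_majorize_imp_weak_majorize_general (n : ℕ) (a b : ℕ → ℝ)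
    (ha_pos : ∀ i < n, 0 < a i) (hb_pos : ∀ i < n, 0 < b i)
    (ha_anti : ∀ i, i + 1 < n → a (i + 1) ≤ a i)
    (hmaj : ∀ k, 1 ≤ k → k ≤ n →
      ∏ i ∈ Finset.range k, a i ≤ ∏ i ∈ Finset.range k, b i) :
    ∀ k, 1 ≤ k → k ≤ n →
      ∑ i ∈ Finset.range k, a i ≤ ∑ i ∈ Finset.range k, b i := by
  intro k _ hkn
  have ha : ∀ i < k, 0 < a i := fun i hi => ha_pos i (by omega)
  have hb : ∀ i < k, 0 < b i := fun i hi => hb_pos i (by omega)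
  have hlog : ∑ i ∈ range k, a i * Real.log (a i / b i) ≤ 0 :=
    sum_range_mul_nonpos_of_antitone (fun i hi => (ha i hi).le)
      (fun i hi => ha_anti i (by omega)) fun j hj hjk =>
        Real.sum_log_div_nonpos_of_prod_le
          (fun i hi => ha i (by rw [mem_range] at hi; omega))
          (fun i hi => hb i (by rw [mem_range] at hi; omega)) (hmaj j hj (by omega))
  have htangent : ∑ i ∈ range k, (a i - b i) ≤ ∑ i ∈ range k, a i * Real.log (a i / b i) :=
    sum_le_sum fun i hi => Real.sub_le_mul_log_div (ha i (mem_range.1 hi)) (hb i (mem_range.1 hi))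
  rw [sum_sub_distrib] at htangent
  linarith

/-- Multiplicative majorization implies weak (additive) majorization for positive
nonincreasing vectors (Marshall–Olkin 5.A.2.b): if all leading partial products
of `a` are bounded by those of `b`, with equality of the full products, then all
leading partial sums of `a` are bounded by those of `b`. -/
theorem mul_majorize_imp_weak_majorize (n : ℕ) (hn : 1 ≤ n) (a b : ℕ → ℝ)
    (ha_pos : ∀ i < n, 0 < a i) (hb_pos : ∀ i < n, 0 < b i)
    (ha_anti : ∀ i, i + 1 < n → a (i + 1) ≤ a i)
    (hb_anti : ∀ i, i + 1 < n → b (i + 1) ≤ b i)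
    (hmaj : ∀ k, 1 ≤ k → k ≤ n →
      ∏ i ∈ Finset.range k, a i ≤ ∏ i ∈ Finset.range k, b i)
    (heq : ∏ i ∈ Finset.range n, a i = ∏ i ∈ Finset.range n, b i) :
    ∀ k, 1 ≤ k → k ≤ n →
      ∑ i ∈ Finset.range k, a i ≤ ∑ i ∈ Finset.range k, b i :=
  mul_majorize_imp_weak_majorize_general n a b ha_pos hb_pos ha_anti hmaj
end

section
/- Let n ≥ 1 and let a₁ ≥ a₂ ≥ … ≥ a_n > 0, g₁,…,g_n > 0, and p₁,…,p_n > 0 be real numbers. Let T > 0 and let x₁,…,x_n ≥ 0 satisfy g_i·x_i ≥ g_{i+1}·x_{i+1} for all 1 ≤ i ≤ n−1 and Σ_{i=1}^n x_i < T. Then there exist x'₁,…,x'_n with x'_i ≥ x_i for all i, Σ_{i=1}^n x'_i = T, g_i·x'_i ≥ g_{i+1}·x'_{i+1} for all 1 ≤ i ≤ n−1, and Σ_{i=1}^n log₂(1 + a_i·p_i/(1 + g_i·x'_i)) < Σ_{i=1}^n log₂(1 + a_i·p_i/(1 + g_i·x_i)). -/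
open BigOperators

/-- Minimization half of Lemma 2: if the interference allocation `x` does not use
the full budget `T`, it can be enlarged to an ordered allocation `x'` summing to
`T` that yields a strictly smaller source–relay rate. Hence the worst-case
interference uses the full budget. -/
theorem interference_uses_full_budget (n : ℕ) (hn : 1 ≤ n)
    (a g p : ℕ → ℝ) (T : ℝ) (hT : 0 < T)
    (ha_pos : ∀ i < n, 0 < a i)
    (ha_anti : ∀ i, i + 1 < n → a (i + 1) ≤ a i)
    (hg_pos : ∀ i < n, 0 < g i)
    (hp_pos : ∀ i < n, 0 < p i)
    (x : ℕ → ℝ) (hx_nonneg : ∀ i < n, 0 ≤ x i)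
    (hx_ord : ∀ i, i + 1 < n → g (i + 1) * x (i + 1) ≤ g i * x i)
    (hx_sum : ∑ i ∈ Finset.range n, x i < T) :
    ∃ x' : ℕ → ℝ,
      (∀ i < n, x i ≤ x' i) ∧
      (∑ i ∈ Finset.range n, x' i = T) ∧
      (∀ i, i + 1 < n → g (i + 1) * x' (i + 1) ≤ g i * x' i) ∧
      ∑ i ∈ Finset.range n, Real.logb 2 (1 + a i * p i / (1 + g i * x' i)) <
        ∑ i ∈ Finset.range n, Real.logb 2 (1 + a i * p i / (1 + g i * x i)) := by
  set δ : ℝ := T - ∑ i ∈ Finset.range n, x i with hδ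
  have hδpos : 0 < δ := by simp [hδ]; linarith
  refine ⟨fun i => x i + (if i = 0 then δ else 0), ?_, ?_, ?_, ?_⟩
  · intro i _
    beta_reduce
    split <;> simp <;> linarith
  · rw [Finset.sum_add_distrib, Finset.sum_ite_eq' (Finset.range n) 0 (fun _ => δ)]
    simp [Finset.mem_range, Nat.lt_of_lt_of_le Nat.zero_lt_one hn, hδ]
  · intro i hi
    have := hx_ord i hi
    have hg0 := hg_pos i (by omega)
    beta_reduce
    split
    · omega
    · split
      · nlinarith
      · simpa using this
  · apply Finset.sum_lt_sum
    · intro i hi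
      rw [Finset.mem_range] at hi
      beta_reduce
      split
      · subst ‹i = 0›
        have h0 : 0 < n := by omega
        have hap : 0 < a 0 * p 0 := mul_pos (ha_pos 0 h0) (hp_pos 0 h0)
        have hg0 := hg_pos 0 h0
        have hx0 := hx_nonneg 0 h0
        have hd1 : (0:ℝ) < 1 + g 0 * x 0 := by nlinarith
        have hd2 : 1 + g 0 * x 0 < 1 + g 0 * (x 0 + δ) := by nlinarith
        have hlt : a 0 * p 0 / (1 + g 0 * (x 0 + δ)) < a 0 * p 0 / (1 + g 0 * x 0) :=
          div_lt_div_of_pos_left hap hd1 hd2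
        have harg : (0:ℝ) < 1 + a 0 * p 0 / (1 + g 0 * (x 0 + δ)) := by positivity
        exact le_of_lt (Real.logb_lt_logb one_lt_two harg (by linarith))
      · simp
    · refine ⟨0, Finset.mem_range.mpr (by omega), ?_⟩
      beta_reduce
      rw [if_pos rfl]
      have h0 : 0 < n := by omega
      have hap : 0 < a 0 * p 0 := mul_pos (ha_pos 0 h0) (hp_pos 0 h0)
      have hg0 := hg_pos 0 h0
      have hx0 := hx_nonneg 0 h0
      have hd1 : (0:ℝ) < 1 + g 0 * x 0 := by nlinarith
      have hd2 : 1 + g 0 * x 0 < 1 + g 0 * (x 0 + δ) := by nlinarith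
      have hlt : a 0 * p 0 / (1 + g 0 * (x 0 + δ)) < a 0 * p 0 / (1 + g 0 * x 0) :=
        div_lt_div_of_pos_left hap hd1 hd2
      have harg : (0:ℝ) < 1 + a 0 * p 0 / (1 + g 0 * (x 0 + δ)) := by positivity
      exact Real.logb_lt_logb one_lt_two harg (by linarith)
end

section
/- Let n ≥ 1 and let a₁,…,a_n > 0, g₁,…,g_n > 0 be real numbers, and let x₁,…,x_n ≥ 0 satisfy g_i·x_i ≥ g_{i+1}·x_{i+1} for all 1 ≤ i ≤ n−1. Let P > 0 and let p₁,…,p_n ≥ 0 satisfy a_i·p_i ≥ a_{i+1}·p_{i+1} for all 1 ≤ i ≤ n−1 and Σ_{i=1}^n p_i < P. Then there exist p'₁,…,p'_n with p'_i ≥ p_i for all i, Σ_{i=1}^n p'_i = P, a_i·p'_i ≥ a_{i+1}·p'_{i+1} for all 1 ≤ i ≤ n−1, and Σ_{i=1}^n log₂(1 + a_i·p'_i/(1 + g_i·x_i)) > Σ_{i=1}^n log₂(1 + a_i·p_i/(1 + g_i·x_i)). -/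
open BigOperators

/-- Maximization half of Lemma 2: if the source power allocation `p` does not use
the full budget `P`, it can be enlarged to an ordered allocation `p'` summing to
`P` that yields a strictly larger source–relay rate. Hence the optimal source
allocation uses the full power budget. -/
theorem source_uses_full_budget (n : ℕ) (hn : 1 ≤ n)
    (a g : ℕ → ℝ) (P : ℝ) (hP : 0 < P)
    (ha_pos : ∀ i < n, 0 < a i)
    (hg_pos : ∀ i < n, 0 < g i)
    (x : ℕ → ℝ) (hx_nonneg : ∀ i < n, 0 ≤ x i)
    (hx_ord : ∀ i, i + 1 < n → g (i + 1) * x (i + 1) ≤ g i * x i)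
    (p : ℕ → ℝ) (hp_nonneg : ∀ i < n, 0 ≤ p i)
    (hp_ord : ∀ i, i + 1 < n → a (i + 1) * p (i + 1) ≤ a i * p i)
    (hp_sum : ∑ i ∈ Finset.range n, p i < P) :
    ∃ p' : ℕ → ℝ,
      (∀ i < n, p i ≤ p' i) ∧
      (∑ i ∈ Finset.range n, p' i = P) ∧
      (∀ i, i + 1 < n → a (i + 1) * p' (i + 1) ≤ a i * p' i) ∧
      ∑ i ∈ Finset.range n, Real.logb 2 (1 + a i * p i / (1 + g i * x i)) <
        ∑ i ∈ Finset.range n, Real.logb 2 (1 + a i * p' i / (1 + g i * x i)) := by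
  set δ := P - ∑ i ∈ Finset.range n, p i with hδ
  have hδpos : 0 < δ := by simp [hδ]; linarith
  refine ⟨fun i => p i + if i = 0 then δ else 0, ?_, ?_, ?_, ?_⟩
  · intro i _
    by_cases h : i = 0 <;> simp [h] <;> linarith
  · rw [Finset.sum_add_distrib, Finset.sum_ite_eq' (Finset.range n) 0 (fun _ => δ)]
    simp [Finset.mem_range, hn, Nat.lt_of_lt_of_le Nat.zero_lt_one hn, hδ]
  · intro i hi
    have h1 : i + 1 ≠ 0 := by omega
    by_cases h : i = 0
    · subst h
      norm_num
      have := hp_ord 0 hi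
      have ha0 : 0 < a 0 := ha_pos 0 (by omega)
      nlinarith
    · simp only [if_neg h, if_neg h1]
      simpa using hp_ord i hi
  · apply Finset.sum_lt_sum
    · intro i hi
      rw [Finset.mem_range] at hi
      have hden : 0 < 1 + g i * x i := by
        have := mul_nonneg (hg_pos i hi).le (hx_nonneg i hi); linarith
      apply Real.logb_le_logb_of_le one_lt_two
      · have hnum : 0 ≤ a i * p i := mul_nonneg (ha_pos i hi).le (hp_nonneg i hi)
        have := div_nonneg hnum hden.le; linarith
      have hkey : a i * p i ≤ a i * (p i + if i = 0 then δ else 0) := by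
        by_cases h : i = 0
        · subst h; norm_num; nlinarith [ha_pos 0 hi]
        · simp [h]
      have := div_le_div_of_nonneg_right hkey hden.le
      simp only
      linarith
    · refine ⟨0, Finset.mem_range.mpr (by omega), ?_⟩
      have h0 : (0:ℕ) < n := by omega
      have hden : 0 < 1 + g 0 * x 0 := by
        have := mul_nonneg (hg_pos 0 h0).le (hx_nonneg 0 h0); linarith
      apply Real.logb_lt_logb one_lt_two
      · have : 0 ≤ a 0 * p 0 / (1 + g 0 * x 0) :=
          div_nonneg (mul_nonneg (ha_pos 0 h0).le (hp_nonneg 0 h0)) hden.le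
        linarith
      · norm_num
        have h1 : a 0 * p 0 < a 0 * (p 0 + δ) := by nlinarith [ha_pos 0 h0]
        have h3 := (div_lt_div_iff_of_pos_right hden).mpr h1
        linarith
end
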